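/- arXiv:1712.09910 — 9 statements merged into one kernel-verified Lean document; each statement's English description precedes it below -/
import Mathlib

section
/- Let (C_i, d_i) for i ∈ ℤ/3ℤ be chain complexes over 𝔽₂, with maps f_i : C_i → C_{i+1}, g_i : C_i → C_{i+2}, h_i : C_i → C_{i+3} satisfying d_i² = 0, d_{i+1}f_i + f_i d_i = 0, d_{i+2}g_i + f_{i+1}f_i + g_i d_i = 0, and d_{i+3}h_i + f_{i+2}g_i + g_{i+1}f_i + h_i d_i = 1. Then the map (f_i, g_i) : C_i → Cone(f_{i+1}) := (C_{i+1} ⊕ C_{i+2}[1], d_{i+1} + d_{i+2} + f_{i+1}) is a chain map inducing an isomorphism on homology. -/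
/-- The differential of the mapping cone `Cone(f) = (A ⊕ B[1], d_A + d_B + f)` of a map
`f : (A, dA) → (B, dB)` between (ungraded) chain complexes over `𝔽₂`. -/
def coneD {R A B : Type} [CommRing R] [AddCommGroup A] [AddCommGroup B]
    [Module R A] [Module R B] (dA : A →ₗ[R] A) (dB : B →ₗ[R] B) (f : A →ₗ[R] B) :
    (A × B) →ₗ[R] (A × B) :=
  LinearMap.prod (dA ∘ₗ LinearMap.fst R A B)
    (f ∘ₗ LinearMap.fst R A B + dB ∘ₗ LinearMap.snd R A B)

lemma char2_self {M : Type} [AddCommGroup M] [Module (ZMod 2) M] (v : M) : v + v = 0 := by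
  have h : (2 : ZMod 2) • v = 0 := by rw [show (2 : ZMod 2) = 0 by decide, zero_smul]
  rw [two_smul] at h; exact h

lemma contraction {T : Type} [AddCommGroup T] [Module (ZMod 2) T]
    (D : T →ₗ[ZMod 2] T) (S E : T → T)
    (hS0 : S 0 = 0)
    (hDD : ∀ t, D (D t) = 0)
    (hDS : ∀ t, D (S t) + S (D t) = t + E t)
    (hE3 : ∀ t, E (E (E t)) = 0)
    (t : T) (ht : D t = 0) :
    ∃ u, D u = t := by
  have key : ∀ s, D s = 0 → D (S s) = s + E s := by
    intro s hs
    have h1 := hDS s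
    rw [hs, hS0, add_zero] at h1
    exact h1
  have hDE : ∀ s, D s = 0 → D (E s) = 0 := by
    intro s hs
    have h1 := key s hs
    have h2 : E s = D (S s) + s := by
      linear_combination (norm := module) - h1 - char2_self s
    rw [h2, map_add, hDD, hs, add_zero]
  have ht1 : D (E t) = 0 := hDE t ht
  have ht2 : D (E (E t)) = 0 := hDE _ ht1
  refine ⟨S t + S (E t) + S (E (E t)), ?_⟩
  rw [map_add, map_add, key t ht, key _ ht1, key _ ht2, hE3, add_zero]
  linear_combination (norm := module) char2_self (E t) + char2_self (E (E t))

lemma branch {C0 C1 C2 : Type} [AddCommGroup C0] [AddCommGroup C1] [AddCommGroup C2]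
    [Module (ZMod 2) C0] [Module (ZMod 2) C1] [Module (ZMod 2) C2]
    (d0 : C0 →ₗ[ZMod 2] C0) (d1 : C1 →ₗ[ZMod 2] C1) (d2 : C2 →ₗ[ZMod 2] C2)
    (f0 : C0 →ₗ[ZMod 2] C1) (f1 : C1 →ₗ[ZMod 2] C2) (f2 : C2 →ₗ[ZMod 2] C0)
    (g0 : C0 →ₗ[ZMod 2] C2) (g1 : C1 →ₗ[ZMod 2] C0) (g2 : C2 →ₗ[ZMod 2] C1)
    (h0 : C0 →ₗ[ZMod 2] C0) (h1 : C1 →ₗ[ZMod 2] C1) (h2 : C2 →ₗ[ZMod 2] C2)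
    (hd0 : d0 ∘ₗ d0 = 0) (hd1 : d1 ∘ₗ d1 = 0) (hd2 : d2 ∘ₗ d2 = 0)
    (hf0 : d1 ∘ₗ f0 + f0 ∘ₗ d0 = 0) (hf1 : d2 ∘ₗ f1 + f1 ∘ₗ d1 = 0)
    (hf2 : d0 ∘ₗ f2 + f2 ∘ₗ d2 = 0)
    (hg0 : d2 ∘ₗ g0 + f1 ∘ₗ f0 + g0 ∘ₗ d0 = 0)
    (hg1 : d0 ∘ₗ g1 + f2 ∘ₗ f1 + g1 ∘ₗ d1 = 0)
    (hg2 : d1 ∘ₗ g2 + f0 ∘ₗ f2 + g2 ∘ₗ d2 = 0)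
    (hh0 : d0 ∘ₗ h0 + f2 ∘ₗ g0 + g1 ∘ₗ f0 + h0 ∘ₗ d0 = LinearMap.id)
    (hh1 : d1 ∘ₗ h1 + f0 ∘ₗ g1 + g2 ∘ₗ f1 + h1 ∘ₗ d1 = LinearMap.id)
    (hh2 : d2 ∘ₗ h2 + f1 ∘ₗ g2 + g0 ∘ₗ f2 + h2 ∘ₗ d2 = LinearMap.id) :
    (coneD d1 d2 f1 ∘ₗ LinearMap.prod f0 g0 = LinearMap.prod f0 g0 ∘ₗ d0) ∧
      (∀ z : C1 × C2, coneD d1 d2 f1 z = 0 →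
        ∃ x : C0, d0 x = 0 ∧ ∃ w, LinearMap.prod f0 g0 x - z = coneD d1 d2 f1 w) ∧
      (∀ x : C0, d0 x = 0 → (∃ w, LinearMap.prod f0 g0 x = coneD d1 d2 f1 w) →
        ∃ y, x = d0 y) := by
  have Hd0 : ∀ v, d0 (d0 v) = 0 := fun v => by simpa using LinearMap.congr_fun hd0 v
  have Hd1 : ∀ v, d1 (d1 v) = 0 := fun v => by simpa using LinearMap.congr_fun hd1 v
  have Hd2 : ∀ v, d2 (d2 v) = 0 := fun v => by simpa using LinearMap.congr_fun hd2 v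
  have Hf0 : ∀ v, d1 (f0 v) + f0 (d0 v) = 0 := fun v => by
    simpa using LinearMap.congr_fun hf0 v
  have Hf1 : ∀ v, d2 (f1 v) + f1 (d1 v) = 0 := fun v => by
    simpa using LinearMap.congr_fun hf1 v
  have Hf2 : ∀ v, d0 (f2 v) + f2 (d2 v) = 0 := fun v => by
    simpa using LinearMap.congr_fun hf2 v
  have Hg0 : ∀ v, d2 (g0 v) + f1 (f0 v) + g0 (d0 v) = 0 := fun v => by
    simpa using LinearMap.congr_fun hg0 v
  have Hg1 : ∀ v, d0 (g1 v) + f2 (f1 v) + g1 (d1 v) = 0 := fun v => by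
    simpa using LinearMap.congr_fun hg1 v
  have Hg2 : ∀ v, d1 (g2 v) + f0 (f2 v) + g2 (d2 v) = 0 := fun v => by
    simpa using LinearMap.congr_fun hg2 v
  have Hh0 : ∀ v, d0 (h0 v) + f2 (g0 v) + g1 (f0 v) + h0 (d0 v) = v := fun v => by
    simpa using LinearMap.congr_fun hh0 v
  have Hh1 : ∀ v, d1 (h1 v) + f0 (g1 v) + g2 (f1 v) + h1 (d1 v) = v := fun v => by
    simpa using LinearMap.congr_fun hh1 v
  have Hh2 : ∀ v, d2 (h2 v) + f1 (g2 v) + g0 (f2 v) + h2 (d2 v) = v := fun v => by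
    simpa using LinearMap.congr_fun hh2 v
  set DT : (C0 × C1 × C2) →ₗ[ZMod 2] (C0 × C1 × C2) :=
    coneD d0 (coneD d1 d2 f1) (LinearMap.prod f0 g0) with hDT
  have DTapp : ∀ t : C0 × C1 × C2,
      DT t = (d0 t.1, (d1 t.2.1 + f0 t.1, f1 t.2.1 + d2 t.2.2 + g0 t.1)) := by
    intro t
    refine Prod.ext rfl (Prod.ext ?_ ?_)
    · show f0 t.1 + d1 t.2.1 = d1 t.2.1 + f0 t.1
      abel
    · show g0 t.1 + (f1 t.2.1 + d2 t.2.2) = f1 t.2.1 + d2 t.2.2 + g0 t.1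
      abel
  set S : C0 × C1 × C2 → C0 × C1 × C2 := fun t =>
    (g1 t.2.1 + f2 t.2.2 + h0 t.1, (h1 t.2.1 + g2 t.2.2, h2 t.2.2)) with hS
  set E : C0 × C1 × C2 → C0 × C1 × C2 := fun t =>
    (0, (f0 (h0 t.1) + h1 (f0 t.1) + g2 (g0 t.1),
      g0 (g1 t.2.1) + f1 (h1 t.2.1) + h2 (f1 t.2.1) + g0 (h0 t.1) + h2 (g0 t.1))) with hE
  have hS0 : S 0 = 0 := by simp [hS]
  have hDD : ∀ t, DT (DT t) = 0 := by
    intro t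
    obtain ⟨x, a, b⟩ := t
    rw [DTapp, DTapp]
    refine Prod.ext ?_ (Prod.ext ?_ ?_) <;> simp only [map_add, Prod.fst_add, Prod.snd_add, Prod.fst_zero, Prod.snd_zero]
    · exact Hd0 x
    · linear_combination (norm := module) Hd1 a + Hf0 x
    · linear_combination (norm := module) Hf1 a + Hd2 b + Hg0 x
  have hDS : ∀ t, DT (S t) + S (DT t) = t + E t := by
    intro t
    obtain ⟨x, a, b⟩ := t
    rw [DTapp]
    simp only [hS, hE]
    rw [DTapp]
    refine Prod.ext ?_ (Prod.ext ?_ ?_) <;> simp only [map_add, Prod.fst_add, Prod.snd_add, Prod.fst_zero, Prod.snd_zero]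
    · linear_combination (norm := module) Hg1 a + Hf2 b + Hh0 x
    · linear_combination (norm := module) Hh1 a + Hg2 b
    · linear_combination (norm := module) Hh2 b
  have hE3 : ∀ t, E (E (E t)) = 0 := by
    intro t
    simp [hE]
  refine ⟨?_, ?_, ?_⟩
  · ext v
    · show d1 (f0 v) = f0 (d0 v)
      linear_combination (norm := module) Hf0 v - char2_self (f0 (d0 v))
    · show f1 (f0 v) + d2 (g0 v) = g0 (d0 v)
      linear_combination (norm := module) Hg0 v - char2_self (g0 (d0 v))
  · intro z hz
    have h1 : d1 z.1 = 0 := congrArg Prod.fst hz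
    have h2 : f1 z.1 + d2 z.2 = 0 := congrArg Prod.snd hz
    have htc : DT ((0 : C0), z) = 0 := by
      rw [DTapp]
      simp [h1, h2]
    obtain ⟨u, hc⟩ := contraction DT S E hS0 hDD hDS hE3 _ htc
    rw [DTapp] at hc
    have hx : d0 u.1 = 0 := congrArg Prod.fst hc
    have hc1 : d1 u.2.1 + f0 u.1 = z.1 := congrArg (fun p => p.2.1) hc
    have hc2 : f1 u.2.1 + d2 u.2.2 + g0 u.1 = z.2 := congrArg (fun p => p.2.2) hc
    refine ⟨u.1, hx, u.2, Prod.ext ?_ ?_⟩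
    · show f0 u.1 - z.1 = d1 u.2.1
      linear_combination (norm := module) hc1 - char2_self (d1 u.2.1)
    · show g0 u.1 - z.2 = f1 u.2.1 + d2 u.2.2
      linear_combination (norm := module)
        hc2 - char2_self (f1 u.2.1) - char2_self (d2 u.2.2)
  · rintro x hx ⟨w, hw⟩
    have hw1 : f0 x = d1 w.1 := congrArg Prod.fst hw
    have hw2 : g0 x = f1 w.1 + d2 w.2 := congrArg Prod.snd hw
    have htc : DT (x, w) = 0 := by
      rw [DTapp]
      have : d0 (x, w).1 = 0 := hx
      refine Prod.ext this (Prod.ext ?_ ?_)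
      · show d1 w.1 + f0 x = (0 : C1 × C2).1
        rw [hw1, char2_self]; rfl
      · show f1 w.1 + d2 w.2 + g0 x = (0 : C1 × C2).2
        rw [hw2, char2_self]; rfl
    obtain ⟨u, hc⟩ := contraction DT S E hS0 hDD hDS hE3 _ htc
    rw [DTapp] at hc
    exact ⟨u.1, (congrArg Prod.fst hc).symm⟩

/-- Triangle detection lemma: given chain complexes `(Cᵢ, dᵢ)`, `i ∈ ℤ/3`, over `𝔽₂` with maps
`fᵢ : Cᵢ → Cᵢ₊₁`, `gᵢ : Cᵢ → Cᵢ₊₂`, `hᵢ : Cᵢ → Cᵢ₊₃ = Cᵢ` satisfying the four relations, the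
map `(fᵢ, gᵢ) : Cᵢ → Cone(fᵢ₊₁)` is a chain map inducing an isomorphism on homology (stated
for each `i`: injectivity and surjectivity of the induced map on homology classes). -/
theorem stmt0
    {C0 C1 C2 : Type} [AddCommGroup C0] [AddCommGroup C1] [AddCommGroup C2]
    [Module (ZMod 2) C0] [Module (ZMod 2) C1] [Module (ZMod 2) C2]
    (d0 : C0 →ₗ[ZMod 2] C0) (d1 : C1 →ₗ[ZMod 2] C1) (d2 : C2 →ₗ[ZMod 2] C2)
    (f0 : C0 →ₗ[ZMod 2] C1) (f1 : C1 →ₗ[ZMod 2] C2) (f2 : C2 →ₗ[ZMod 2] C0)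
    (g0 : C0 →ₗ[ZMod 2] C2) (g1 : C1 →ₗ[ZMod 2] C0) (g2 : C2 →ₗ[ZMod 2] C1)
    (h0 : C0 →ₗ[ZMod 2] C0) (h1 : C1 →ₗ[ZMod 2] C1) (h2 : C2 →ₗ[ZMod 2] C2)
    (hd0 : d0 ∘ₗ d0 = 0) (hd1 : d1 ∘ₗ d1 = 0) (hd2 : d2 ∘ₗ d2 = 0)
    (hf0 : d1 ∘ₗ f0 + f0 ∘ₗ d0 = 0) (hf1 : d2 ∘ₗ f1 + f1 ∘ₗ d1 = 0)
    (hf2 : d0 ∘ₗ f2 + f2 ∘ₗ d2 = 0)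
    (hg0 : d2 ∘ₗ g0 + f1 ∘ₗ f0 + g0 ∘ₗ d0 = 0)
    (hg1 : d0 ∘ₗ g1 + f2 ∘ₗ f1 + g1 ∘ₗ d1 = 0)
    (hg2 : d1 ∘ₗ g2 + f0 ∘ₗ f2 + g2 ∘ₗ d2 = 0)
    (hh0 : d0 ∘ₗ h0 + f2 ∘ₗ g0 + g1 ∘ₗ f0 + h0 ∘ₗ d0 = LinearMap.id)
    (hh1 : d1 ∘ₗ h1 + f0 ∘ₗ g1 + g2 ∘ₗ f1 + h1 ∘ₗ d1 = LinearMap.id)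
    (hh2 : d2 ∘ₗ h2 + f1 ∘ₗ g2 + g0 ∘ₗ f2 + h2 ∘ₗ d2 = LinearMap.id) :
    -- i = 0 : C0 → Cone(f1)
    ((coneD d1 d2 f1 ∘ₗ LinearMap.prod f0 g0 = LinearMap.prod f0 g0 ∘ₗ d0) ∧
      (∀ z : C1 × C2, coneD d1 d2 f1 z = 0 →
        ∃ x : C0, d0 x = 0 ∧ ∃ w, LinearMap.prod f0 g0 x - z = coneD d1 d2 f1 w) ∧
      (∀ x : C0, d0 x = 0 → (∃ w, LinearMap.prod f0 g0 x = coneD d1 d2 f1 w) →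
        ∃ y, x = d0 y)) ∧
    -- i = 1 : C1 → Cone(f2)
    ((coneD d2 d0 f2 ∘ₗ LinearMap.prod f1 g1 = LinearMap.prod f1 g1 ∘ₗ d1) ∧
      (∀ z : C2 × C0, coneD d2 d0 f2 z = 0 →
        ∃ x : C1, d1 x = 0 ∧ ∃ w, LinearMap.prod f1 g1 x - z = coneD d2 d0 f2 w) ∧
      (∀ x : C1, d1 x = 0 → (∃ w, LinearMap.prod f1 g1 x = coneD d2 d0 f2 w) →
        ∃ y, x = d1 y)) ∧
    -- i = 2 : C2 → Cone(f0)
    ((coneD d0 d1 f0 ∘ₗ LinearMap.prod f2 g2 = LinearMap.prod f2 g2 ∘ₗ d2) ∧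
      (∀ z : C0 × C1, coneD d0 d1 f0 z = 0 →
        ∃ x : C2, d2 x = 0 ∧ ∃ w, LinearMap.prod f2 g2 x - z = coneD d0 d1 f0 w) ∧
      (∀ x : C2, d2 x = 0 → (∃ w, LinearMap.prod f2 g2 x = coneD d0 d1 f0 w) →
        ∃ y, x = d2 y)) := by
  exact ⟨branch d0 d1 d2 f0 f1 f2 g0 g1 g2 h0 h1 h2 hd0 hd1 hd2 hf0 hf1 hf2 hg0 hg1 hg2 hh0 hh1 hh2,
    branch d1 d2 d0 f1 f2 f0 g1 g2 g0 h1 h2 h0 hd1 hd2 hd0 hf1 hf2 hf0 hg1 hg2 hg0 hh1 hh2 hh0,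
    branch d2 d0 d1 f2 f0 f1 g2 g0 g1 h2 h0 h1 hd2 hd0 hd1 hf2 hf0 hf1 hg2 hg0 hg1 hh2 hh0 hh1⟩
end

section
/- Let (C_i, d_i) for i ∈ ℤ/3ℤ be chain complexes over 𝔽₂ with maps f_i, g_i, h_i satisfying d_i² = 0, d_{i+1}f_i + f_i d_i = 0, d_{i+2}g_i + f_{i+1}f_i + g_i d_i = 0, and d_{i+3}h_i + f_{i+2}g_i + g_{i+1}f_i + h_i d_i = 1. Then the induced maps on homology (f_i)_* fit into a 3-periodic exact sequence: for each i, the kernel of (f_{i+1})_* : H(C_{i+1}) → H(C_{i+2}) equals the image of (f_i)_* : H(C_i) → H(C_{i+1}). -/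
lemma add_self_zmod2 {A : Type} [AddCommGroup A] [Module (ZMod 2) A] (a : A) : a + a = 0 := by
  have := two_smul (ZMod 2) a
  rw [show (2 : ZMod 2) = 0 by decide, zero_smul] at this
  exact this.symm

lemma neg_eq_self_zmod2 {A : Type} [AddCommGroup A] [Module (ZMod 2) A] (a : A) : -a = a :=
  neg_eq_of_add_eq_zero_left (add_self_zmod2 a)

lemma eq_iff_add_zmod2 {A : Type} [AddCommGroup A] [Module (ZMod 2) A] (a b : A) :
    a = b ↔ a + b = 0 := by
  constructor
  · rintro rfl; exact add_self_zmod2 a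
  · intro h
    have : a + b + b = b := by rw [h, zero_add]
    rwa [add_assoc, add_self_zmod2, add_zero] at this

lemma triangle_aux {A B C : Type} [AddCommGroup A] [AddCommGroup B] [AddCommGroup C]
    [Module (ZMod 2) A] [Module (ZMod 2) B] [Module (ZMod 2) C]
    (dA : A →ₗ[ZMod 2] A) (dB : B →ₗ[ZMod 2] B) (dC : C →ₗ[ZMod 2] C)
    (fA : A →ₗ[ZMod 2] B) (fB : B →ₗ[ZMod 2] C) (fC : C →ₗ[ZMod 2] A)
    (gA : A →ₗ[ZMod 2] C) (gB : B →ₗ[ZMod 2] A) (gC : C →ₗ[ZMod 2] B)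
    (hB : B →ₗ[ZMod 2] B)
    (hfB : dC ∘ₗ fB + fB ∘ₗ dB = 0)
    (hfC : dA ∘ₗ fC + fC ∘ₗ dC = 0)
    (hgA : dC ∘ₗ gA + fB ∘ₗ fA + gA ∘ₗ dA = 0)
    (hgB : dA ∘ₗ gB + fC ∘ₗ fB + gB ∘ₗ dB = 0)
    (hgC : dB ∘ₗ gC + fA ∘ₗ fC + gC ∘ₗ dC = 0)
    (hhB : dB ∘ₗ hB + fA ∘ₗ gB + gC ∘ₗ fB + hB ∘ₗ dB = LinearMap.id) :
    ∀ x : B, dB x = 0 →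
      ((∃ w : C, fB x = dC w) ↔ ∃ y : A, dA y = 0 ∧ ∃ w : B, fA y - x = dB w) := by
  intro x hx
  constructor
  · rintro ⟨w, hw⟩
    refine ⟨gB x + fC w, ?_, hB x + gC w, ?_⟩
    · have e1 := LinearMap.congr_fun hgB x
      have e2 := LinearMap.congr_fun hfC w
      simp only [LinearMap.add_apply, LinearMap.comp_apply, LinearMap.zero_apply] at e1 e2
      rw [hx, map_zero, add_zero, hw] at e1
      -- e1 : dA (gB x) + fC (dC w) = 0 ; e2 : dA (fC w) + fC (dC w) = 0
      have key : (dA (gB x) + fC (dC w)) + (dA (fC w) + fC (dC w))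
          = (dA (gB x) + dA (fC w)) + (fC (dC w) + fC (dC w)) := by abel
      rw [e1, e2, add_self_zmod2 (fC (dC w))] at key
      rw [map_add]; simpa using key.symm
    · have e3 := LinearMap.congr_fun hhB x
      have e4 := LinearMap.congr_fun hgC w
      simp only [LinearMap.add_apply, LinearMap.comp_apply, LinearMap.zero_apply,
        LinearMap.id_apply] at e3 e4
      rw [hx, map_zero, add_zero] at e3
      rw [← hw] at e4
      have e3' : dB (hB x) + fA (gB x) + gC (fB x) + x = 0 := (eq_iff_add_zmod2 _ _).mp e3
      rw [eq_iff_add_zmod2, map_add, map_add, sub_eq_add_neg, neg_eq_self_zmod2]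
      have key : (dB (hB x) + fA (gB x) + gC (fB x) + x) + (dB (gC w) + fA (fC w) + gC (fB x))
          = (fA (gB x) + fA (fC w) + x + (dB (hB x) + dB (gC w))) + (gC (fB x) + gC (fB x)) := by
        abel
      rw [e3', e4, add_self_zmod2 (gC (fB x))] at key
      simpa using key.symm
  · rintro ⟨y, hy, w, hw⟩
    have e1 := LinearMap.congr_fun hgA y
    have e2 := LinearMap.congr_fun hfB w
    simp only [LinearMap.add_apply, LinearMap.comp_apply, LinearMap.zero_apply] at e1 e2
    rw [hy, map_zero, add_zero] at e1
    have h1 : fB (fA y) = dC (gA y) := by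
      have := eq_neg_of_add_eq_zero_right e1; rwa [neg_eq_self_zmod2] at this
    have h2 : fB (dB w) = dC (fB w) := by
      have := eq_neg_of_add_eq_zero_right e2; rwa [neg_eq_self_zmod2] at this
    refine ⟨gA y - fB w, ?_⟩
    have hx' : x = fA y - dB w := by rw [← hw]; abel
    rw [hx', map_sub, h1, h2, map_sub]


/-- Given chain complexes `(Cᵢ, dᵢ)`, `i ∈ ℤ/3`, over `𝔽₂` with maps `fᵢ, gᵢ, hᵢ` satisfying
the four relations of the triangle detection lemma, the induced maps `(fᵢ)_*` on homology form
a 3-periodic exact sequence: for each `i`, the kernel of `(fᵢ₊₁)_*` equals the image of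
`(fᵢ)_*` (stated at the level of cycles and boundaries). -/
theorem stmt1
    {C0 C1 C2 : Type} [AddCommGroup C0] [AddCommGroup C1] [AddCommGroup C2]
    [Module (ZMod 2) C0] [Module (ZMod 2) C1] [Module (ZMod 2) C2]
    (d0 : C0 →ₗ[ZMod 2] C0) (d1 : C1 →ₗ[ZMod 2] C1) (d2 : C2 →ₗ[ZMod 2] C2)
    (f0 : C0 →ₗ[ZMod 2] C1) (f1 : C1 →ₗ[ZMod 2] C2) (f2 : C2 →ₗ[ZMod 2] C0)
    (g0 : C0 →ₗ[ZMod 2] C2) (g1 : C1 →ₗ[ZMod 2] C0) (g2 : C2 →ₗ[ZMod 2] C1)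
    (h0 : C0 →ₗ[ZMod 2] C0) (h1 : C1 →ₗ[ZMod 2] C1) (h2 : C2 →ₗ[ZMod 2] C2)
    (hd0 : d0 ∘ₗ d0 = 0) (hd1 : d1 ∘ₗ d1 = 0) (hd2 : d2 ∘ₗ d2 = 0)
    (hf0 : d1 ∘ₗ f0 + f0 ∘ₗ d0 = 0) (hf1 : d2 ∘ₗ f1 + f1 ∘ₗ d1 = 0)
    (hf2 : d0 ∘ₗ f2 + f2 ∘ₗ d2 = 0)
    (hg0 : d2 ∘ₗ g0 + f1 ∘ₗ f0 + g0 ∘ₗ d0 = 0)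
    (hg1 : d0 ∘ₗ g1 + f2 ∘ₗ f1 + g1 ∘ₗ d1 = 0)
    (hg2 : d1 ∘ₗ g2 + f0 ∘ₗ f2 + g2 ∘ₗ d2 = 0)
    (hh0 : d0 ∘ₗ h0 + f2 ∘ₗ g0 + g1 ∘ₗ f0 + h0 ∘ₗ d0 = LinearMap.id)
    (hh1 : d1 ∘ₗ h1 + f0 ∘ₗ g1 + g2 ∘ₗ f1 + h1 ∘ₗ d1 = LinearMap.id)
    (hh2 : d2 ∘ₗ h2 + f1 ∘ₗ g2 + g0 ∘ₗ f2 + h2 ∘ₗ d2 = LinearMap.id) :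
    -- exactness at H(C1): ker (f1)_* = im (f0)_*
    (∀ x : C1, d1 x = 0 →
      ((∃ w : C2, f1 x = d2 w) ↔ ∃ y : C0, d0 y = 0 ∧ ∃ w : C1, f0 y - x = d1 w)) ∧
    -- exactness at H(C2): ker (f2)_* = im (f1)_*
    (∀ x : C2, d2 x = 0 →
      ((∃ w : C0, f2 x = d0 w) ↔ ∃ y : C1, d1 y = 0 ∧ ∃ w : C2, f1 y - x = d2 w)) ∧
    -- exactness at H(C0): ker (f0)_* = im (f2)_*
    (∀ x : C0, d0 x = 0 →
      ((∃ w : C1, f0 x = d1 w) ↔ ∃ y : C2, d2 y = 0 ∧ ∃ w : C0, f2 y - x = d0 w)) := by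
  exact ⟨triangle_aux d0 d1 d2 f0 f1 f2 g0 g1 g2 h1 hf1 hf2 hg0 hg1 hg2 hh1,
    triangle_aux d1 d2 d0 f1 f2 f0 g1 g2 g0 h2 hf2 hf0 hg1 hg2 hg0 hh2,
    triangle_aux d2 d0 d1 f2 f0 f1 g2 g0 g1 h0 hf0 hf1 hg2 hg0 hg1 hh0⟩
end

section
/- Let (C_j, f_k^j) be an exact n-gon over 𝔽₂. Set C = ⊕_{j=0}^{n-1} C_j and D = Σ_{0≤j≤n-1} d_j + Σ_{0≤j<k≤n-1} f_k^j. Then D² = 0 and the complex (C, D) is acyclic, i.e., H(C, D) = 0. -/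
/-!
Let `h` be the map whose `k`-th component is `∑_{j ≥ k} f j k`: the maps of the polygon that
wrap around past `C_{n-1}`. The relations of length `< n` give `D² = 0`. Together with the
full-turn relation they show that `D h + h D - 1` is strictly lower triangular for the order
`0 < 1 < ⋯ < n - 1` of the summands, hence nilpotent, so `u = D h + h D` is invertible.
Since `D² = 0`, `u` commutes with `D`, and every cycle `x` is the boundary `x = D (h (u⁻¹ x))`.
-/

open Finset

theorem add_self_eq_zero_of_charP_two (R : Type*) {V : Type*} [Ring R] [CharP R 2]
    [AddCommGroup V] [Module R V] (x : V) : x + x = 0 := by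
  rw [← two_smul R x, CharTwo.two_eq_zero, zero_smul]

theorem Finset.sum_Ico_add_period {V : Type*} [AddCommMonoid V] {n : ℕ} {g : ℕ → V}
    (hg : ∀ m, g (m + n) = g m) {s : ℕ} (hs : s ≤ n) (l : ℕ) :
    ∑ m ∈ Ico s (l + n), g m = ∑ m ∈ Ico s n, g m + ∑ m ∈ range l, g m := by
  have hshift := sum_Ico_add' g 0 l n
  rw [zero_add] at hshift
  rw [← sum_Ico_consecutive _ hs (Nat.le_add_left n l), ← hshift, range_eq_Ico]
  simp only [hg]

theorem Finset.sum_Ico_eq_sum_Ico_of_eq_zero {V : Type*} [AddCommMonoid V] {g : ℕ → V}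
    {a l b : ℕ} (hal : a ≤ l) (hlb : l ≤ b) (hg : ∀ m < l, g m = 0) :
    ∑ m ∈ Ico a b, g m = ∑ m ∈ Ico l b, g m := by
  rw [← sum_Ico_consecutive _ hal hlb, sum_eq_zero fun m hm => hg m (mem_Ico.mp hm).2, zero_add]

theorem ZMod.sum_filter_val {n : ℕ} [NeZero n] {V : Type*} [AddCommMonoid V] (p : ℕ → Prop)
    [DecidablePred p] (g : ZMod n → V) :
    ∑ j ∈ univ.filter (fun j : ZMod n => p j.val), g j = ∑ m ∈ (range n).filter p, g m := by
  refine sum_nbij' ZMod.val (↑) ?_ ?_ ?_ ?_ ?_ <;>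
    simp +contextual [ZMod.val_lt, Nat.mod_eq_of_lt]

namespace Module.End

variable {R V : Type*} [Semiring R] [AddCommMonoid V] [Module R V]

theorem exists_apply_eq_of_isUnit_mul_add_mul {D h : Module.End R V} (hD : D * D = 0)
    (hu : IsUnit (D * h + h * D)) {x : V} (hx : D x = 0) : ∃ y, D y = x := by
  obtain ⟨u, hu⟩ := hu
  have hcomm : Commute D u := by
    rw [hu, Commute, SemiconjBy, mul_add, add_mul, ← mul_assoc, hD, mul_assoc h, hD]
    simp only [zero_mul, mul_zero, zero_add, add_zero, mul_assoc]
  set y : V := (↑u⁻¹ : Module.End R V) x with hy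
  have hDy : D y = 0 := by
    rw [hy, ← Module.End.mul_apply, hcomm.units_inv_right.eq, Module.End.mul_apply, hx, map_zero]
  refine ⟨h y, ?_⟩
  calc D (h y) = (D * h + h * D) y := by simp [hDy]
    _ = x := by rw [← hu, hy, ← Module.End.mul_apply, Units.mul_inv, Module.End.one_apply]

theorem isNilpotent_of_strictlyLowerTriangular {ι : Type*} {M : ι → Type*}
    [∀ i, AddCommMonoid (M i)] [∀ i, Module R (M i)] (v : ι → ℕ) {t : ℕ} (hv : ∀ i, v i < t)
    (N : Module.End R (∀ i, M i)) (hN : ∀ x i, (∀ j, v j < v i → x j = 0) → N x i = 0) :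
    IsNilpotent N := by
  have hpow : ∀ s x i, v i < s → (N ^ s) x i = 0 := by
    intro s
    induction s with
    | zero => intro x i hi; omega
    | succ s ih =>
      intro x i hi
      rw [pow_succ', Module.End.mul_apply]
      exact hN _ i fun j hj => ih x j (by omega)
  exact ⟨t, LinearMap.ext fun x => funext fun i => hpow t x i (hv i)⟩

end Module.End

namespace ExactPolygon

variable {n : ℕ} {R : Type*} [CommRing R] {M : ZMod n → Type*} [∀ j, AddCommGroup (M j)]
  [∀ j, Module R (M j)] (d : ∀ j, M j →ₗ[R] M j) (f : ∀ j k : ZMod n, M j →ₗ[R] M k)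

def PolygonRelations : Prop :=
  ∀ (j : ZMod n) (r : ℕ), 1 ≤ r → r < n →
    ∑ m ∈ Ico 1 r, f (j + (m : ZMod n)) (j + (r : ZMod n)) ∘ₗ f j (j + (m : ZMod n)) =
      d (j + (r : ZMod n)) ∘ₗ f j (j + (r : ZMod n)) + f j (j + (r : ZMod n)) ∘ₗ d j

def FullTurnRelation : Prop :=
  ∀ j : ZMod n, ∑ m ∈ Ico 1 n, f (j + (m : ZMod n)) j ∘ₗ f j (j + (m : ZMod n)) =
    d j ∘ₗ f j j + f j j ∘ₗ d j + LinearMap.id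

variable {d f}

theorem comp_congr_mid {a i i' l : ZMod n} (h : i = i') :
    f i l ∘ₗ f a i = f i' l ∘ₗ f a i' := by
  subst h; rfl

theorem sum_Ico_natCast_comp {a r : ℕ} (l : ZMod n) :
    ∑ m ∈ Ico 1 r, f (a + (m : ZMod n)) l ∘ₗ f a (a + (m : ZMod n)) =
      ∑ m ∈ Ico (a + 1) (a + r), f m l ∘ₗ f a m := by
  rw [add_comm a 1, add_comm a r, ← sum_Ico_add']
  exact sum_congr rfl fun m _ => comp_congr_mid (by push_cast; ring)

theorem PolygonRelations.sum_comp_natCast (hrel : PolygonRelations d f) {a l : ℕ} (hal : a < l)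
    (hla : l < a + n) :
    ∑ m ∈ Ico (a + 1) l, f m l ∘ₗ f a m = d l ∘ₗ f a l + f a l ∘ₗ d a := by
  have h := hrel a (l - a) (by omega) (by omega)
  rwa [← Nat.cast_add, Nat.add_sub_cancel' hal.le, sum_Ico_natCast_comp,
    Nat.add_sub_cancel' hal.le] at h

theorem FullTurnRelation.sum_comp_natCast (hdiag : FullTurnRelation d f) (a : ℕ) :
    ∑ m ∈ Ico (a + 1) (a + n), f m a ∘ₗ f a m =
      d a ∘ₗ f a a + f a a ∘ₗ d a + LinearMap.id := by
  rw [← sum_Ico_natCast_comp, hdiag]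

theorem sum_Ico_comp_natCast_add_period {a : ℕ} (ha : a < n) (l : ℕ) (k : ZMod n) :
    ∑ m ∈ Ico (a + 1) (l + n), f m k ∘ₗ f a m =
      ∑ m ∈ Ico (a + 1) n, f m k ∘ₗ f a m + ∑ m ∈ range l, f m k ∘ₗ f a m :=
  sum_Ico_add_period (fun m => comp_congr_mid (by simp)) ha l

theorem PolygonRelations.sum_comp_wrap (hrel : PolygonRelations d f) {l s : ℕ} (hls : l < s)
    (hs : s < n) :
    ∑ m ∈ Ico (s + 1) n, f m l ∘ₗ f s m + ∑ m ∈ range l, f m l ∘ₗ f s m =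
      d l ∘ₗ f s l + f s l ∘ₗ d s := by
  have h := hrel.sum_comp_natCast (a := s) (l := l + n) (by omega) (by omega)
  rwa [Nat.cast_add, ZMod.natCast_self, add_zero, sum_Ico_comp_natCast_add_period hs] at h

theorem FullTurnRelation.sum_comp_wrap (hdiag : FullTurnRelation d f) {l : ℕ} (hl : l < n) :
    ∑ m ∈ Ico (l + 1) n, f m l ∘ₗ f l m + ∑ m ∈ range l, f m l ∘ₗ f l m =
      d l ∘ₗ f l l + f l l ∘ₗ d l + LinearMap.id := by
  rw [← sum_Ico_comp_natCast_add_period hl, hdiag.sum_comp_natCast]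

variable [NeZero n] (d f)

def totalDiff : (∀ j, M j) →ₗ[R] ∀ j, M j :=
  LinearMap.pi fun k => d k ∘ₗ LinearMap.proj k +
    ∑ j ∈ univ.filter (fun j : ZMod n => j.val < k.val), f j k ∘ₗ LinearMap.proj j

def contraction : (∀ j, M j) →ₗ[R] ∀ j, M j :=
  LinearMap.pi fun k =>
    ∑ j ∈ univ.filter (fun j : ZMod n => k.val ≤ j.val), f j k ∘ₗ LinearMap.proj j

theorem totalDiff_apply_natCast (x : ∀ j, M j) {l : ℕ} (hl : l < n) :
    totalDiff d f x l = d l (x l) + ∑ m ∈ range l, f m l (x m) := by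
  simp only [totalDiff, LinearMap.pi_apply, LinearMap.add_apply, LinearMap.coe_comp,
    Function.comp_apply, LinearMap.proj_apply, LinearMap.sum_apply, ZMod.val_natCast_of_lt hl,
    ZMod.sum_filter_val (· < l)]
  congr 2
  ext m; simp; omega

theorem contraction_apply_natCast (x : ∀ j, M j) {l : ℕ} (hl : l < n) :
    contraction f x l = ∑ m ∈ Ico l n, f m l (x m) := by
  simp only [contraction, LinearMap.pi_apply, LinearMap.coe_comp,
    Function.comp_apply, LinearMap.proj_apply, LinearMap.sum_apply, ZMod.val_natCast_of_lt hl,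
    ZMod.sum_filter_val (l ≤ ·)]
  congr 1
  ext m; simp; omega

variable {d f}

theorem totalDiff_comp_self [CharP R 2] (hd : ∀ j, d j ∘ₗ d j = 0)
    (hrel : PolygonRelations d f) :
    totalDiff d f ∘ₗ totalDiff d f = 0 := by
  refine LinearMap.ext fun x => funext fun k => ?_
  obtain ⟨l, hl, rfl⟩ : ∃ l < n, (l : ZMod n) = k := ⟨k.val, k.val_lt, k.natCast_zmod_val⟩
  have hterm : ∀ a ∈ range l, (d l ∘ₗ f a l + f a l ∘ₗ d a) (x a) +
      ∑ m ∈ Ico (a + 1) l, f m l (f a m (x a)) = 0 := by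
    intro a ha
    rw [mem_range] at ha
    simp only [← LinearMap.comp_apply, ← LinearMap.sum_apply,
      hrel.sum_comp_natCast ha (by omega)]
    exact add_self_eq_zero_of_charP_two R _
  have hDx : ∀ m ∈ range l, f m l (totalDiff d f x m) =
      f m l (d m (x m)) + ∑ a ∈ range m, f m l (f a m (x a)) := fun m hm => by
    rw [totalDiff_apply_natCast _ _ _ ((mem_range.mp hm).trans hl), map_add, map_sum]
  calc (totalDiff d f ∘ₗ totalDiff d f) x l
      = ∑ a ∈ range l, ((d l ∘ₗ f a l + f a l ∘ₗ d a) (x a) +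
          ∑ m ∈ Ico (a + 1) l, f m l (f a m (x a))) := by
        rw [LinearMap.comp_apply, totalDiff_apply_natCast _ _ _ hl,
          totalDiff_apply_natCast _ _ _ hl, sum_congr rfl hDx, map_add, map_sum,
          ← LinearMap.comp_apply (d l), hd, LinearMap.zero_apply, zero_add]
        simp only [LinearMap.add_apply, LinearMap.comp_apply, sum_add_distrib, range_eq_Ico,
          sum_Ico_Ico_comm', add_assoc]
    _ = 0 := sum_eq_zero hterm

variable {x : ∀ j, M j} {l : ℕ}

theorem totalDiff_contraction_apply_natCast (hl : l < n) (hx : ∀ m < l, x m = 0) :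
    totalDiff d f (contraction f x) l =
      ∑ s ∈ Ico l n, (d l ∘ₗ f s l + ∑ m ∈ range l, f m l ∘ₗ f s m) (x s) := by
  have hhx : ∀ m ∈ range l,
      f m l (contraction f x m) = ∑ s ∈ Ico l n, f m l (f s m (x s)) := fun m hm => by
      rw [contraction_apply_natCast _ _ ((mem_range.mp hm).trans hl), map_sum,
        sum_Ico_eq_sum_Ico_of_eq_zero (mem_range.mp hm).le hl.le fun s hs => by
          rw [hx s hs, map_zero, map_zero]]
  rw [totalDiff_apply_natCast _ _ _ hl, contraction_apply_natCast _ _ hl, sum_congr rfl hhx,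
    sum_comm, map_sum, ← sum_add_distrib]
  simp only [LinearMap.add_apply, LinearMap.comp_apply, LinearMap.sum_apply]

theorem contraction_totalDiff_apply_natCast (hl : l < n) (hx : ∀ m < l, x m = 0) :
    contraction f (totalDiff d f x) l =
      ∑ s ∈ Ico l n, (f s l ∘ₗ d s + ∑ m ∈ Ico (s + 1) n, f m l ∘ₗ f s m) (x s) := by
  have hDx : ∀ s ∈ Ico l n, f s l (totalDiff d f x s) =
      f s l (d s (x s)) + ∑ a ∈ Ico l s, f s l (f a s (x a)) := fun s hs => by
    rw [totalDiff_apply_natCast _ _ _ (mem_Ico.mp hs).2, map_add, map_sum, range_eq_Ico,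
      sum_Ico_eq_sum_Ico_of_eq_zero (Nat.zero_le l) (mem_Ico.mp hs).1 fun a ha => by
        rw [hx a ha, map_zero, map_zero]]
  rw [contraction_apply_natCast _ _ hl, sum_congr rfl hDx, sum_add_distrib,
    ← sum_Ico_Ico_comm', ← sum_add_distrib]
  simp only [LinearMap.add_apply, LinearMap.comp_apply, LinearMap.sum_apply]

variable [CharP R 2]

theorem totalDiff_contraction_add_contraction_totalDiff_apply_natCast
    (hrel : PolygonRelations d f) (hdiag : FullTurnRelation d f) (hl : l < n)
    (hx : ∀ m < l, x m = 0) :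
    totalDiff d f (contraction f x) l + contraction f (totalDiff d f x) l = x l := by
  have hterm : ∀ s ∈ Ico l n,
      (d l ∘ₗ f s l + ∑ m ∈ range l, f m l ∘ₗ f s m) (x s) +
        (f s l ∘ₗ d s + ∑ m ∈ Ico (s + 1) n, f m l ∘ₗ f s m) (x s) =
      (d l ∘ₗ f s l + f s l ∘ₗ d s +
        (∑ m ∈ Ico (s + 1) n, f m l ∘ₗ f s m + ∑ m ∈ range l, f m l ∘ₗ f s m)) (x s) :=
    fun s _ => by rw [← LinearMap.add_apply]; congr 1; abel
  rw [totalDiff_contraction_apply_natCast hl hx, contraction_totalDiff_apply_natCast hl hx,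
    ← sum_add_distrib, sum_congr rfl hterm, sum_eq_single_of_mem l (mem_Ico.mpr ⟨le_rfl, hl⟩)]
  · rw [hdiag.sum_comp_wrap hl, ← add_assoc, add_self_eq_zero_of_charP_two R, zero_add,
      LinearMap.id_apply]
  · intro s hs hne
    rw [hrel.sum_comp_wrap (lt_of_le_of_ne (mem_Ico.mp hs).1 (Ne.symm hne)) (mem_Ico.mp hs).2,
      add_self_eq_zero_of_charP_two R, LinearMap.zero_apply]

theorem isUnit_totalDiff_mul_contraction_add_mul (hrel : PolygonRelations d f)
    (hdiag : FullTurnRelation d f) :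
    IsUnit (totalDiff d f * contraction f + contraction f * totalDiff d f) := by
  set N := totalDiff d f * contraction f + contraction f * totalDiff d f - 1 with hN
  have hnil : IsNilpotent N :=
    Module.End.isNilpotent_of_strictlyLowerTriangular ZMod.val ZMod.val_lt N fun x k hx => by
      obtain ⟨l, hl, rfl⟩ : ∃ l < n, (l : ZMod n) = k :=
        ⟨k.val, k.val_lt, k.natCast_zmod_val⟩
      have hx' : ∀ m < l, x m = 0 := fun m hm =>
        hx m (by rwa [ZMod.val_natCast_of_lt (hm.trans hl), ZMod.val_natCast_of_lt hl])
      rw [hN, LinearMap.sub_apply, LinearMap.add_apply, Module.End.mul_apply,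
        Module.End.mul_apply, Module.End.one_apply, Pi.sub_apply, Pi.add_apply,
        totalDiff_contraction_add_contraction_totalDiff_apply_natCast hrel hdiag hl hx', sub_self]
  simpa [hN] using hnil.isUnit_one_add

end ExactPolygon

/-- Let `(C_j, f_k^j)` be an exact `n`-gon over `𝔽₂` (encoded `n`-periodically: the complex at
the residue `j : ZMod n` is `M j` with differential `d j`, and `f j k : M j →ₗ M k` is the map
`f_k^j` for `j < k < j + n`, while `f j j` is the wrap-around map `f_{j+n}^j`).  Then the total
complex `(C, D)` with `C = ⊕_{j=0}^{n-1} C_j` and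
`D = Σ_j d_j + Σ_{0 ≤ j < k ≤ n-1} f_k^j` satisfies `D² = 0` and is acyclic. -/
theorem stmt2 (n : ℕ) [NeZero n] (M : ZMod n → Type)
    [∀ j, AddCommGroup (M j)] [∀ j, Module (ZMod 2) (M j)]
    (d : ∀ j, M j →ₗ[ZMod 2] M j)
    (f : ∀ j k : ZMod n, M j →ₗ[ZMod 2] M k)
    (hd : ∀ j, d j ∘ₗ d j = 0)
    (hrel : ∀ (j : ZMod n) (r : ℕ), 1 ≤ r → r < n →
      (∑ m ∈ Finset.Ico 1 r,
          f (j + (m : ZMod n)) (j + (r : ZMod n)) ∘ₗ f j (j + (m : ZMod n))) =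
        d (j + (r : ZMod n)) ∘ₗ f j (j + (r : ZMod n)) +
          f j (j + (r : ZMod n)) ∘ₗ d j)
    (hdiag : ∀ j : ZMod n,
      (∑ m ∈ Finset.Ico 1 n, f (j + (m : ZMod n)) j ∘ₗ f j (j + (m : ZMod n))) =
        d j ∘ₗ f j j + f j j ∘ₗ d j + LinearMap.id)
    (D : (∀ j, M j) →ₗ[ZMod 2] ∀ j, M j)
    (hD : D = LinearMap.pi (fun k =>
      d k ∘ₗ LinearMap.proj k +
        ∑ j ∈ Finset.univ.filter (fun j : ZMod n => j.val < k.val),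
          f j k ∘ₗ LinearMap.proj j)) :
    D ∘ₗ D = 0 ∧ ∀ x, D x = 0 → ∃ y, D y = x := by
  subst hD
  have hDD : ExactPolygon.totalDiff d f ∘ₗ ExactPolygon.totalDiff d f = 0 :=
    ExactPolygon.totalDiff_comp_self hd hrel
  exact ⟨hDD, fun x hx => Module.End.exists_apply_eq_of_isUnit_mul_add_mul hDD
    (ExactPolygon.isUnit_totalDiff_mul_contraction_add_mul hrel hdiag) hx⟩
end

section
/- Let (C_j, f_k^j) be an exact n-gon over 𝔽₂. Fix i, set C_i' = C_{i+1} ⊕ ⋯ ⊕ C_{i+n-1} with differential D_i' = Σ_{i<j<n+i} d_j + Σ_{i<j<k<n+i} f_k^j. Then (C_i', D_i') is a chain complex which is chain homotopy equivalent to (C_i, d_i); explicitly, F = (f_{i+1}^i, …, f_{i+n-1}^i) : C_i → C_i' and G = Σ_{i<j<n+i} f_{n+i}^j : C_i' → C_i are chain maps with GF homotopic to the identity via the homotopy f_{n+i}^i, and FG homotopic to an automorphism of C_i' via the homotopy Σ_{i<j≤k<n+i} f_{n+j}^k. -/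
namespace Stmt3Aux

variable {n : ℕ} [NeZero n]

lemma val_add_of_lt (x : ZMod n) (m : ℕ) (h : x.val + m < n) :
    (x + (m : ZMod n)).val = x.val + m := by
  have hm : m < n := lt_of_le_of_lt (Nat.le_add_left m x.val) h
  rw [ZMod.val_add, ZMod.val_natCast, Nat.mod_eq_of_lt hm, Nat.mod_eq_of_lt h]

lemma val_add_of_ge (x : ZMod n) (m : ℕ) (hm : m < n) (h : n ≤ x.val + m) :
    (x + (m : ZMod n)).val = x.val + m - n := by
  have hx := ZMod.val_lt x
  rw [ZMod.val_add, ZMod.val_natCast, Nat.mod_eq_of_lt hm, Nat.mod_eq_sub_mod h,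
    Nat.mod_eq_of_lt (by omega)]

lemma val_injective : Function.Injective (ZMod.val : ZMod n → ℕ) := by
  intro x y h
  rw [← ZMod.natCast_zmod_val x, ← ZMod.natCast_zmod_val y, h]

lemma val_sub_of_le (x y : ZMod n) (h : y.val ≤ x.val) :
    (x - y).val = x.val - y.val := by
  have hx := ZMod.val_lt x
  have : (y + ((x.val - y.val : ℕ) : ZMod n)).val = x.val := by
    rw [val_add_of_lt _ _ (by omega)]; omega
  have h2 : y + ((x.val - y.val : ℕ) : ZMod n) = x := val_injective this
  have h3 : x - y = ((x.val - y.val : ℕ) : ZMod n) := by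
    rw [eq_comm, eq_sub_iff_add_eq, add_comm]; exact h2
  rw [h3, ZMod.val_natCast, Nat.mod_eq_of_lt (by omega)]

lemma val_sub_of_gt (x y : ZMod n) (h : x.val < y.val) :
    (x - y).val = n + x.val - y.val := by
  have hx := ZMod.val_lt x
  have hy := ZMod.val_lt y
  have : (y + ((n + x.val - y.val : ℕ) : ZMod n)).val = x.val := by
    rw [val_add_of_ge _ _ (by omega) (by omega)]; omega
  have h2 : y + ((n + x.val - y.val : ℕ) : ZMod n) = x := val_injective this
  have h3 : x - y = ((n + x.val - y.val : ℕ) : ZMod n) := by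
    rw [eq_comm, eq_sub_iff_add_eq, add_comm]; exact h2
  rw [h3, ZMod.val_natCast, Nat.mod_eq_of_lt (by omega)]

lemma add_val_cast (b x : ZMod n) : b + (((x - b).val : ℕ) : ZMod n) = x := by
  rw [ZMod.natCast_zmod_val]; ring

lemma char2 {V : Type} [AddCommGroup V] [Module (ZMod 2) V] (v : V) : v + v = 0 := by
  rw [← two_smul (ZMod 2) v, show (2 : ZMod 2) = 0 by decide, zero_smul]

lemma char2_cancel {V : Type} [AddCommGroup V] [Module (ZMod 2) V] (a b : V) :
    a + (b + (a + b)) = 0 := by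
  have h : a + (b + (a + b)) = (a + a) + (b + b) := by abel
  rw [h, char2, char2, add_zero]

lemma char2_comb1 {V : Type} [AddCommGroup V] [Module (ZMod 2) V]
    (b1 dk b3 fd b5 v : V) (h : b5 + b1 + b3 = dk + fd + v) :
    b1 + (dk + b3) + (fd + b5) = v := by
  have e : b1 + (dk + b3) + (fd + b5) = (b5 + b1 + b3) + (dk + fd) := by abel
  have e2 : dk + fd + v + (dk + fd) = v + ((dk + fd) + (dk + fd)) := by abel
  rw [e, h, e2, char2, add_zero]

lemma char2_comb2 {V : Type} [AddCommGroup V] [Module (ZMod 2) V]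
    (b1 dk b3 fd b5 : V) (h : b5 + b1 + b3 = dk + fd) :
    b1 + (dk + b3) + (fd + b5) = 0 := by
  have e : b1 + (dk + b3) + (fd + b5) = (b5 + b1 + b3) + (dk + fd) := by abel
  rw [e, h, char2]

lemma reindex {N : Type} [AddCommMonoid N] {i : ZMod n} (b : ZMod n) (S : Finset ℕ)
    (p : {j : ZMod n // j ≠ i} → Prop) [DecidablePred p]
    (g : {j : ZMod n // j ≠ i} → N) (G : ℕ → N)
    (h1 : ∀ m ∈ S, m < n)
    (h2 : ∀ m ∈ S, b + (m : ZMod n) ≠ i)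
    (h3 : ∀ m ∈ S, ∀ h : b + (m : ZMod n) ≠ i, p ⟨b + (m : ZMod n), h⟩)
    (h4 : ∀ j : {j : ZMod n // j ≠ i}, p j → (j.1 - b).val ∈ S)
    (h5 : ∀ j : {j : ZMod n // j ≠ i}, p j → g j = G ((j.1 - b).val)) :
    (∑ j ∈ Finset.univ.filter p, g j) = ∑ m ∈ S, G m := by
  refine Finset.sum_bij' (fun j _ => (j.1 - b).val)
    (fun m hm => (⟨b + (m : ZMod n), h2 m hm⟩ : {j : ZMod n // j ≠ i}))
    ?_ ?_ ?_ ?_ ?_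
  · intro j hj
    exact h4 j (Finset.mem_filter.mp hj).2
  · intro m hm
    simp only [Finset.mem_filter, Finset.mem_univ, true_and]
    exact h3 m hm (h2 m hm)
  · intro j _
    exact Subtype.ext (add_val_cast b j.1)
  · intro m hm
    simp only [add_sub_cancel_left, ZMod.val_natCast, Nat.mod_eq_of_lt (h1 m hm)]
  · intro j hj
    exact h5 j (Finset.mem_filter.mp hj).2

end Stmt3Aux

open Stmt3Aux

/-- Let `(C_j, f_k^j)` be an exact `n`-gon over `𝔽₂` (encoded `n`-periodically: the complex at
the residue `j : ZMod n` is `M j` with differential `d j`, and `f j k : M j →ₗ M k` is the map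
`f_k^j` for `j < k < j + n`, while `f j j` is the wrap-around map `f_{j+n}^j`).  Fix `i`.
Then `C_i' = ⊕_{i<j<n+i} C_j` with `D_i' = Σ d_j + Σ_{i<j<k<n+i} f_k^j` is a chain complex,
`F = (f_{i+1}^i, …, f_{i+n-1}^i)` and `G = Σ_{i<j<n+i} f_{n+i}^j` are chain maps, `GF` is
homotopic to the identity via the homotopy `f_{n+i}^i`, and `FG` is homotopic to an
automorphism of `C_i'` via the homotopy `K = Σ_{i<j≤k<n+i} f_{n+j}^k`. -/
theorem stmt3 (n : ℕ) [NeZero n] (M : ZMod n → Type)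
    [∀ j, AddCommGroup (M j)] [∀ j, Module (ZMod 2) (M j)]
    (d : ∀ j, M j →ₗ[ZMod 2] M j)
    (f : ∀ j k : ZMod n, M j →ₗ[ZMod 2] M k)
    (hd : ∀ j, d j ∘ₗ d j = 0)
    (hrel : ∀ (j : ZMod n) (r : ℕ), 1 ≤ r → r < n →
      (∑ m ∈ Finset.Ico 1 r,
          f (j + (m : ZMod n)) (j + (r : ZMod n)) ∘ₗ f j (j + (m : ZMod n))) =
        d (j + (r : ZMod n)) ∘ₗ f j (j + (r : ZMod n)) +
          f j (j + (r : ZMod n)) ∘ₗ d j)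
    (hdiag : ∀ j : ZMod n,
      (∑ m ∈ Finset.Ico 1 n, f (j + (m : ZMod n)) j ∘ₗ f j (j + (m : ZMod n))) =
        d j ∘ₗ f j j + f j j ∘ₗ d j + LinearMap.id)
    (i : ZMod n)
    (D' : (∀ j : {j : ZMod n // j ≠ i}, M j.1) →ₗ[ZMod 2] ∀ j : {j : ZMod n // j ≠ i}, M j.1)
    (hD' : D' = LinearMap.pi (fun k : {j : ZMod n // j ≠ i} =>
      d k.1 ∘ₗ LinearMap.proj k +
        ∑ j ∈ Finset.univ.filter
            (fun j : {j : ZMod n // j ≠ i} => (j.1 - i).val < (k.1 - i).val),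
          f j.1 k.1 ∘ₗ LinearMap.proj j))
    (F : M i →ₗ[ZMod 2] ∀ j : {j : ZMod n // j ≠ i}, M j.1)
    (hF : F = LinearMap.pi (fun j : {j : ZMod n // j ≠ i} => f i j.1))
    (G : (∀ j : {j : ZMod n // j ≠ i}, M j.1) →ₗ[ZMod 2] M i)
    (hG : G = ∑ j : {j : ZMod n // j ≠ i}, f j.1 i ∘ₗ LinearMap.proj j)
    (K : (∀ j : {j : ZMod n // j ≠ i}, M j.1) →ₗ[ZMod 2] ∀ j : {j : ZMod n // j ≠ i}, M j.1)
    (hK : K = LinearMap.pi (fun k : {j : ZMod n // j ≠ i} =>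
      ∑ j ∈ Finset.univ.filter
          (fun j : {j : ZMod n // j ≠ i} => (k.1 - i).val ≤ (j.1 - i).val),
        f j.1 k.1 ∘ₗ LinearMap.proj j)) :
    D' ∘ₗ D' = 0 ∧
    D' ∘ₗ F = F ∘ₗ d i ∧
    d i ∘ₗ G = G ∘ₗ D' ∧
    G ∘ₗ F + LinearMap.id = d i ∘ₗ f i i + f i i ∘ₗ d i ∧
    Function.Bijective (F ∘ₗ G + D' ∘ₗ K + K ∘ₗ D') := by
  have hapos : ∀ j : {j : ZMod n // j ≠ i}, 0 < (j.1 - i).val := by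
    intro j
    refine Nat.pos_of_ne_zero fun h => j.2 ?_
    have := (ZMod.val_eq_zero _).mp h
    rwa [sub_eq_zero] at this
  have halt : ∀ j : {j : ZMod n // j ≠ i}, (j.1 - i).val < n := fun j => ZMod.val_lt _
  have hainj : ∀ j l : {j : ZMod n // j ≠ i}, (j.1 - i).val = (l.1 - i).val → j = l := by
    intro j l h
    have h2 := val_injective h
    exact Subtype.ext (by rw [← sub_add_cancel j.1 i, h2, sub_add_cancel])
  have hvalb : ∀ (b : ZMod n) (m : ℕ), (b - i).val + m < n →
      ((b + (m : ZMod n)) - i).val = (b - i).val + m := by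
    intro b m h
    rw [show b + (m : ZMod n) - i = (b - i) + (m : ZMod n) by ring, val_add_of_lt _ _ h]
  have hvalb2 : ∀ (b : ZMod n) (m : ℕ), m < n → n ≤ (b - i).val + m →
      ((b + (m : ZMod n)) - i).val = (b - i).val + m - n := by
    intro b m hm h
    rw [show b + (m : ZMod n) - i = (b - i) + (m : ZMod n) by ring, val_add_of_ge _ _ hm h]
  have hneb : ∀ (b : ZMod n) (m : ℕ), ((b + (m : ZMod n)) - i).val ≠ 0 →
      b + (m : ZMod n) ≠ i := by
    intro b m h hh
    rw [hh] at h
    simp at h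
  -- Part 1 : D' ∘ D' = 0
  have part1 : D' ∘ₗ D' = 0 := by
    rw [hD']
    apply LinearMap.ext; intro x
    funext k
    simp only [LinearMap.comp_apply, LinearMap.pi_apply, LinearMap.add_apply,
      LinearMap.sum_apply, LinearMap.proj_apply, LinearMap.zero_apply, map_add, map_sum,
      Pi.zero_apply]
    have hdd : d k.1 (d k.1 (x k)) = 0 := by
      have := LinearMap.congr_fun (hd k.1) (x k)
      simpa using this
    rw [hdd, zero_add, Finset.sum_add_distrib]
    rw [Finset.sum_comm' (t' := Finset.univ.filter
          (fun l : {j : ZMod n // j ≠ i} => (l.1 - i).val < (k.1 - i).val))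
        (s' := fun l => Finset.univ.filter
          (fun j : {j : ZMod n // j ≠ i} =>
            (l.1 - i).val < (j.1 - i).val ∧ (j.1 - i).val < (k.1 - i).val))
        (by intro j l; simp only [Finset.mem_filter, Finset.mem_univ, true_and, and_true]; try omega)]
    have hinner : ∀ l : {j : ZMod n // j ≠ i}, l ∈ Finset.univ.filter
        (fun l : {j : ZMod n // j ≠ i} => (l.1 - i).val < (k.1 - i).val) →
        (∑ j ∈ Finset.univ.filter
            (fun j : {j : ZMod n // j ≠ i} =>
              (l.1 - i).val < (j.1 - i).val ∧ (j.1 - i).val < (k.1 - i).val),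
          f j.1 k.1 (f l.1 j.1 (x l))) =
        d k.1 (f l.1 k.1 (x l)) + f l.1 k.1 (d l.1 (x l)) := by
      intro l hl
      simp only [Finset.mem_filter, Finset.mem_univ, true_and] at hl
      have hlk : l.1 + (((k.1 - i).val - (l.1 - i).val : ℕ) : ZMod n) = k.1 := by
        rw [Nat.cast_sub (le_of_lt hl), ZMod.natCast_zmod_val, ZMod.natCast_zmod_val]; ring
      rw [reindex l.1 (Finset.Ico 1 ((k.1 - i).val - (l.1 - i).val)) _ _
          (fun m => f (l.1 + (m : ZMod n)) k.1 (f l.1 (l.1 + (m : ZMod n)) (x l)))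
          (fun m hm => by
            simp only [Finset.mem_Ico] at hm
            have := halt k; omega)
          (fun m hm => by
            simp only [Finset.mem_Ico] at hm
            apply hneb
            rw [hvalb l.1 m (by have := halt k; omega)]
            have := hapos l; omega)
          (fun m hm h => by
            simp only [Finset.mem_Ico] at hm
            constructor
            · rw [hvalb l.1 m (by have := halt k; omega)]; omega
            · rw [hvalb l.1 m (by have := halt k; omega)]; omega)
          (fun j hj => by
            simp only [Finset.mem_Ico]
            rw [show j.1 - l.1 = (j.1 - i) - (l.1 - i) by ring,
              val_sub_of_le _ _ (le_of_lt hj.1)]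
            omega)
          (fun j hj => by conv_lhs => rw [← add_val_cast l.1 j.1])]
      have h := LinearMap.congr_fun
        (hrel l.1 ((k.1 - i).val - (l.1 - i).val) (by omega) (by have := halt k; omega)) (x l)
      simp only [LinearMap.sum_apply, LinearMap.comp_apply, LinearMap.add_apply] at h
      rw [hlk] at h
      exact h
    rw [Finset.sum_congr rfl hinner, ← Finset.sum_add_distrib, ← Finset.sum_add_distrib]
    apply Finset.sum_eq_zero
    intro j _
    exact char2_cancel _ _
  -- Part 2 : D' ∘ F = F ∘ d i
  have part2 : D' ∘ₗ F = F ∘ₗ d i := by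
    rw [hD', hF]
    apply LinearMap.ext; intro x
    funext k
    simp only [LinearMap.comp_apply, LinearMap.pi_apply, LinearMap.add_apply,
      LinearMap.sum_apply, LinearMap.proj_apply]
    have hk1 : 1 ≤ (k.1 - i).val := hapos k
    have hkn : (k.1 - i).val < n := halt k
    rw [reindex i (Finset.Ico 1 (k.1 - i).val) _ _
        (fun m => f (i + (m : ZMod n)) k.1 ((f i (i + (m : ZMod n))) x))
        (fun m hm => by simp only [Finset.mem_Ico] at hm; omega)
        (fun m hm => by
          simp only [Finset.mem_Ico] at hm
          apply hneb
          rw [hvalb i m (by simp; omega)]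
          simp
          omega)
        (fun m hm h => by
          simp only [Finset.mem_Ico] at hm
          have hv := hvalb i m (by simp; omega)
          simp only [hv]
          simp
          omega)
        (fun j hj => by simp only [Finset.mem_Ico]; exact ⟨hapos j, hj⟩)
        (fun j hj => by conv_lhs => rw [← add_val_cast i j.1])]
    have h := LinearMap.congr_fun (hrel i ((k.1 - i).val) hk1 hkn) x
    simp only [LinearMap.sum_apply, LinearMap.comp_apply, LinearMap.add_apply] at h
    rw [add_val_cast i k.1] at h
    rw [h, ← add_assoc, char2, zero_add]
  -- Part 3 : d i ∘ G = G ∘ D'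
  have part3 : d i ∘ₗ G = G ∘ₗ D' := by
    rw [hD', hG]
    apply LinearMap.ext; intro x
    simp only [LinearMap.comp_apply, LinearMap.pi_apply, LinearMap.add_apply,
      LinearMap.sum_apply, LinearMap.proj_apply, map_add, map_sum]
    rw [Finset.sum_add_distrib]
    rw [Finset.sum_comm' (s := Finset.univ) (t' := Finset.univ)
        (s' := fun l => Finset.univ.filter
          (fun j : {j : ZMod n // j ≠ i} => (l.1 - i).val < (j.1 - i).val))
        (by intro j l; simp only [Finset.mem_filter, Finset.mem_univ, true_and, and_true]; try omega)]
    rw [← Finset.sum_add_distrib]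
    apply Finset.sum_congr rfl
    intro l _
    have hln := halt l
    have hl1 := hapos l
    have hli : l.1 + ((n - (l.1 - i).val : ℕ) : ZMod n) = i := by
      rw [Nat.cast_sub (le_of_lt hln), ZMod.natCast_self, ZMod.natCast_zmod_val]; ring
    rw [reindex l.1 (Finset.Ico 1 (n - (l.1 - i).val)) _ _
        (fun m => f (l.1 + (m : ZMod n)) i (f l.1 (l.1 + (m : ZMod n)) (x l)))
        (fun m hm => by simp only [Finset.mem_Ico] at hm; omega)
        (fun m hm => by
          simp only [Finset.mem_Ico] at hm
          apply hneb
          rw [hvalb l.1 m (by omega)]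
          omega)
        (fun m hm h => by
          simp only [Finset.mem_Ico] at hm
          rw [hvalb l.1 m (by omega)]
          omega)
        (fun j hj => by
          simp only [Finset.mem_Ico]
          rw [show j.1 - l.1 = (j.1 - i) - (l.1 - i) by ring,
            val_sub_of_le _ _ (le_of_lt hj)]
          have := halt j
          omega)
        (fun j hj => by conv_lhs => rw [← add_val_cast l.1 j.1])]
    have h := LinearMap.congr_fun (hrel l.1 (n - (l.1 - i).val) (by omega) (by omega)) (x l)
    simp only [LinearMap.sum_apply, LinearMap.comp_apply, LinearMap.add_apply] at h
    rw [hli] at h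
    rw [h, add_comm (d i (f l.1 i (x l))) (f l.1 i (d l.1 (x l))), ← add_assoc, char2, zero_add]
  -- Part 4 : G ∘ F + id = d i ∘ f i i + f i i ∘ d i
  have part4 : G ∘ₗ F + LinearMap.id = d i ∘ₗ f i i + f i i ∘ₗ d i := by
    rw [hF, hG]
    apply LinearMap.ext; intro x
    simp only [LinearMap.comp_apply, LinearMap.pi_apply, LinearMap.add_apply,
      LinearMap.sum_apply, LinearMap.proj_apply, LinearMap.id_apply]
    rw [show (Finset.univ : Finset {j : ZMod n // j ≠ i}) =
        Finset.univ.filter (fun j : {j : ZMod n // j ≠ i} => 0 < (j.1 - i).val) from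
        (Finset.filter_true_of_mem (fun j _ => hapos j)).symm]
    rw [reindex i (Finset.Ico 1 n) _ _
        (fun m => f (i + (m : ZMod n)) i (f i (i + (m : ZMod n)) x))
        (fun m hm => by simp only [Finset.mem_Ico] at hm; omega)
        (fun m hm => by
          simp only [Finset.mem_Ico] at hm
          apply hneb
          rw [hvalb i m (by simp; omega)]
          simp
          omega)
        (fun m hm h => by
          simp only [Finset.mem_Ico] at hm
          rw [hvalb i m (by simp; omega)]
          simp
          omega)
        (fun j hj => by simp only [Finset.mem_Ico]; exact ⟨hapos j, halt j⟩)
        (fun j hj => by conv_lhs => rw [← add_val_cast i j.1])]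
    have h := LinearMap.congr_fun (hdiag i) x
    simp only [LinearMap.sum_apply, LinearMap.comp_apply, LinearMap.add_apply,
      LinearMap.id_apply] at h
    rw [h, add_assoc, char2, add_zero]
  refine ⟨part1, part2, part3, part4, ?_⟩
  set Nm : ((j : {j : ZMod n // j ≠ i}) → M j.1) →ₗ[ZMod 2] ((j : {j : ZMod n // j ≠ i}) → M j.1) :=
    LinearMap.pi (fun k : {j : ZMod n // j ≠ i} =>
      ∑ j ∈ Finset.univ.filter
          (fun j : {j : ZMod n // j ≠ i} => (j.1 - i).val < (k.1 - i).val),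
        (f i k.1 ∘ₗ f j.1 i +
          (∑ l ∈ Finset.univ.filter
              (fun l : {j : ZMod n // j ≠ i} => (l.1 - i).val ≤ (j.1 - i).val),
            f l.1 k.1 ∘ₗ f j.1 l.1) +
          (∑ l ∈ Finset.univ.filter
              (fun l : {j : ZMod n // j ≠ i} => (k.1 - i).val ≤ (l.1 - i).val),
            f l.1 k.1 ∘ₗ f j.1 l.1)) ∘ₗ LinearMap.proj j) with hNm
  have hvanish : ∀ (x : (j : {j : ZMod n // j ≠ i}) → M j.1) (k : {j : ZMod n // j ≠ i}),
      (∀ j : {j : ZMod n // j ≠ i}, (j.1 - i).val < (k.1 - i).val → x j = 0) →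
      Nm x k = 0 := by
    intro x k hx
    rw [hNm]
    simp only [LinearMap.pi_apply, LinearMap.sum_apply, LinearMap.comp_apply,
      LinearMap.proj_apply]
    apply Finset.sum_eq_zero
    intro j hj
    simp only [Finset.mem_filter, Finset.mem_univ, true_and] at hj
    rw [hx j hj, map_zero]
  have hnil : ∀ (r : ℕ) (x : (j : {j : ZMod n // j ≠ i}) → M j.1) (k : {j : ZMod n // j ≠ i}),
      (k.1 - i).val ≤ r → ((Nm ^ r) x) k = 0 := by
    intro r
    induction r with
    | zero => intro x k hk; exact absurd hk (by have := hapos k; omega)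
    | succ r ih =>
      intro x k hk
      rw [pow_succ', Module.End.mul_apply]
      exact hvanish _ k (fun j hj => ih _ j (by omega))
  have hnilN : Nm ^ n = 0 := by
    apply LinearMap.ext; intro x
    funext k
    rw [hnil n x k (le_of_lt (halt k))]
    simp
  have hT : F ∘ₗ G + D' ∘ₗ K + K ∘ₗ D' = LinearMap.id + Nm := by
    rw [hD', hF, hG, hK, hNm]
    apply LinearMap.ext; intro x
    funext k
    simp only [LinearMap.add_apply, LinearMap.comp_apply, LinearMap.pi_apply,
      LinearMap.sum_apply, LinearMap.proj_apply, LinearMap.id_apply, map_sum, map_add,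
      Pi.add_apply, Finset.sum_apply]
    have hkn := halt k
    have hk1 := hapos k
    -- the master reindexing identity, for (k.1-i).val ≤ (j.1-i).val
    have hmain : ∀ j : {j : ZMod n // j ≠ i}, (k.1 - i).val ≤ (j.1 - i).val →
        (∑ m ∈ Finset.Ico 1 (n - (j.1 - i).val + (k.1 - i).val),
          f (j.1 + (m : ZMod n)) k.1 (f j.1 (j.1 + (m : ZMod n)) (x j))) =
        (∑ l ∈ Finset.univ.filter
            (fun l : {j : ZMod n // j ≠ i} =>
              (k.1 - i).val ≤ (l.1 - i).val ∧ (j.1 - i).val < (l.1 - i).val),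
          f l.1 k.1 (f j.1 l.1 (x j))) +
        f i k.1 (f j.1 i (x j)) +
        (∑ l ∈ Finset.univ.filter
            (fun l : {j : ZMod n // j ≠ i} =>
              (l.1 - i).val < (k.1 - i).val ∧ (l.1 - i).val ≤ (j.1 - i).val),
          f l.1 k.1 (f j.1 l.1 (x j))) := by
      intro j hj
      have hjn := halt j
      have hj1 := hapos j
      have hji : j.1 + ((n - (j.1 - i).val : ℕ) : ZMod n) = i := by
        rw [Nat.cast_sub (le_of_lt hjn), ZMod.natCast_self, ZMod.natCast_zmod_val]; ring
      have hbeta : (∑ l ∈ Finset.univ.filter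
            (fun l : {j : ZMod n // j ≠ i} =>
              (k.1 - i).val ≤ (l.1 - i).val ∧ (j.1 - i).val < (l.1 - i).val),
          f l.1 k.1 (f j.1 l.1 (x j))) =
          ∑ m ∈ Finset.Ico 1 (n - (j.1 - i).val),
            f (j.1 + (m : ZMod n)) k.1 (f j.1 (j.1 + (m : ZMod n)) (x j)) := by
        refine reindex j.1 _ _ _ _
          (fun m hm => by simp only [Finset.mem_Ico] at hm; omega)
          (fun m hm => by
            simp only [Finset.mem_Ico] at hm
            apply hneb
            rw [hvalb j.1 m (by omega)]
            omega)
          (fun m hm h => by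
            simp only [Finset.mem_Ico] at hm
            rw [hvalb j.1 m (by omega)]
            omega)
          (fun l hl => by
            simp only [Finset.mem_Ico]
            rw [show l.1 - j.1 = (l.1 - i) - (j.1 - i) by ring,
              val_sub_of_le _ _ (le_of_lt hl.2)]
            have := halt l
            omega)
          (fun l hl => by conv_lhs => rw [← add_val_cast j.1 l.1])
      have halpha : (∑ l ∈ Finset.univ.filter
            (fun l : {j : ZMod n // j ≠ i} =>
              (l.1 - i).val < (k.1 - i).val ∧ (l.1 - i).val ≤ (j.1 - i).val),
          f l.1 k.1 (f j.1 l.1 (x j))) =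
          ∑ m ∈ Finset.Ico (n - (j.1 - i).val + 1) (n - (j.1 - i).val + (k.1 - i).val),
            f (j.1 + (m : ZMod n)) k.1 (f j.1 (j.1 + (m : ZMod n)) (x j)) := by
        refine reindex j.1 _ _ _ _
          (fun m hm => by simp only [Finset.mem_Ico] at hm; omega)
          (fun m hm => by
            simp only [Finset.mem_Ico] at hm
            apply hneb
            rw [hvalb2 j.1 m (by omega) (by omega)]
            omega)
          (fun m hm h => by
            simp only [Finset.mem_Ico] at hm
            rw [hvalb2 j.1 m (by omega) (by omega)]
            omega)
          (fun l hl => by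
            simp only [Finset.mem_Ico]
            have := hapos l
            rw [show l.1 - j.1 = (l.1 - i) - (j.1 - i) by ring,
              val_sub_of_gt (l.1 - i) (j.1 - i) (by omega)]
            omega)
          (fun l hl => by conv_lhs => rw [← add_val_cast j.1 l.1])
      rw [hbeta, halpha]
      rw [← Finset.sum_Ico_consecutive _
          (by omega : 1 ≤ n - (j.1 - i).val)
          (by omega : n - (j.1 - i).val ≤ n - (j.1 - i).val + (k.1 - i).val),
        Finset.sum_eq_sum_Ico_succ_bot
          (by omega : n - (j.1 - i).val < n - (j.1 - i).val + (k.1 - i).val)]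
      rw [hji, add_assoc]
    -- split the (K ∘ D') sum
    rw [Finset.sum_add_distrib]
    -- swap the two double sums
    rw [Finset.sum_comm'
        (s := Finset.univ.filter
          (fun l : {j : ZMod n // j ≠ i} => (l.1 - i).val < (k.1 - i).val))
        (t := fun l => Finset.univ.filter
          (fun j : {j : ZMod n // j ≠ i} => (l.1 - i).val ≤ (j.1 - i).val))
        (t' := Finset.univ)
        (s' := fun j => Finset.univ.filter
          (fun l : {j : ZMod n // j ≠ i} =>
            (l.1 - i).val < (k.1 - i).val ∧ (l.1 - i).val ≤ (j.1 - i).val))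
        (by intro a b
            simp only [Finset.mem_filter, Finset.mem_univ, true_and, and_true])]
    rw [Finset.sum_comm'
        (s := Finset.univ.filter
          (fun l : {j : ZMod n // j ≠ i} => (k.1 - i).val ≤ (l.1 - i).val))
        (t := fun l => Finset.univ.filter
          (fun j : {j : ZMod n // j ≠ i} => (j.1 - i).val < (l.1 - i).val))
        (t' := Finset.univ)
        (s' := fun j => Finset.univ.filter
          (fun l : {j : ZMod n // j ≠ i} =>
            (k.1 - i).val ≤ (l.1 - i).val ∧ (j.1 - i).val < (l.1 - i).val))
        (by intro a b
            simp only [Finset.mem_filter, Finset.mem_univ, true_and, and_true])]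
    -- turn filtered simple sums into sums over univ with ite
    rw [Finset.sum_filter (fun j : {j : ZMod n // j ≠ i} => (k.1 - i).val ≤ (j.1 - i).val)
        (fun j => d k.1 (f j.1 k.1 (x j)))]
    rw [Finset.sum_filter (fun j : {j : ZMod n // j ≠ i} => (k.1 - i).val ≤ (j.1 - i).val)
        (fun j => f j.1 k.1 (d j.1 (x j)))]
    rw [Finset.sum_filter (fun j : {j : ZMod n // j ≠ i} => (j.1 - i).val < (k.1 - i).val)]
    -- write x k as a sum over univ
    have hxk : x k = ∑ j : {j : ZMod n // j ≠ i}, (if j = k then x k else 0) := by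
      rw [Finset.sum_ite_eq' Finset.univ k (fun _ => x k)]
      simp
    rw [hxk]
    -- merge everything into single sums over univ
    rw [← Finset.sum_add_distrib, ← Finset.sum_add_distrib, ← Finset.sum_add_distrib,
      ← Finset.sum_add_distrib, ← Finset.sum_add_distrib]
    refine Finset.sum_congr rfl ?_
    intro j _
    beta_reduce
    by_cases hjk : j = k
    · subst hjk
      rw [if_pos rfl, if_neg (lt_irrefl _), add_zero, if_pos (le_refl _), if_pos (le_refl _)]
      have hM := hmain j (le_refl _)
      rw [Nat.sub_add_cancel (le_of_lt (halt j))] at hM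
      have hdk := LinearMap.congr_fun (hdiag j.1) (x j)
      simp only [LinearMap.sum_apply, LinearMap.comp_apply, LinearMap.add_apply,
        LinearMap.id_apply] at hdk
      exact char2_comb1 _ _ _ _ _ _ (hM.symm.trans hdk)
    · rw [if_neg hjk, zero_add]
      by_cases hlt : (j.1 - i).val < (k.1 - i).val
      · rw [if_pos hlt, if_neg (by omega), if_neg (by omega), zero_add, zero_add]
        congr 1
        · congr 1
          exact Finset.sum_congr
            (Finset.filter_congr (fun l _ => by constructor <;> intro h <;> [exact h.2; exact ⟨by omega, h⟩]))
            (fun _ _ => rfl)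
        · exact Finset.sum_congr
            (Finset.filter_congr (fun l _ => by constructor <;> intro h <;> [exact h.1; exact ⟨h, by omega⟩]))
            (fun _ _ => rfl)
      · have hne : (j.1 - i).val ≠ (k.1 - i).val := fun h => hjk (hainj j k h)
        have hgt : (k.1 - i).val < (j.1 - i).val := by omega
        rw [if_pos (by omega : (k.1 - i).val ≤ (j.1 - i).val),
          if_pos (by omega : (k.1 - i).val ≤ (j.1 - i).val), if_neg hlt]
        have hjn := halt j
        have hrelj := LinearMap.congr_fun
          (hrel j.1 (n - (j.1 - i).val + (k.1 - i).val) (by omega) (by omega)) (x j)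
        simp only [LinearMap.sum_apply, LinearMap.comp_apply, LinearMap.add_apply] at hrelj
        have hjr : j.1 + ((n - (j.1 - i).val + (k.1 - i).val : ℕ) : ZMod n) = k.1 := by
          rw [Nat.cast_add, Nat.cast_sub (le_of_lt hjn), ZMod.natCast_self,
            ZMod.natCast_zmod_val, ZMod.natCast_zmod_val]
          ring
        rw [hjr] at hrelj
        exact char2_comb2 _ _ _ _ _ ((hmain j (le_of_lt hgt)).symm.trans hrelj)
  rw [hT, ← Module.End.one_eq_id]
  exact (Module.End.isUnit_iff _).mp (IsNilpotent.isUnit_one_add ⟨n, hnilN⟩)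
end

section
/- Let (C_j, f_k^j) be an exact n-gon over 𝔽₂ in which each C_j is ℤ/2-graded with each differential d_j of odd degree, and such that f_k^j has degree k - j - 1 (mod 2) whenever 0 ≤ j < k ≤ n-1. Then Σ_{j=0}^{n-1} (-1)^j χ(C_j) = 0, where χ(C_j) denotes the Euler characteristic of the finite-dimensional ℤ/2-graded complex C_j. -/
/-!
Let `T = ⊕ C_j[j]` with differential `D = d + Σ_{j < k} f_k^j`, indices `0 ≤ j < k ≤ n - 1`;
the `n`-gon relations among these indices say exactly that `D² = 0`. The remaining maps, `f_k^j`
with `k ≤ j` read cyclically, form a block-triangular `K`, and the relations that wrap around,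
including the length-`n` ones carrying the identity, give `DK + KD = 1 + N` with `N` strictly
block-triangular, hence nilpotent. So `DK + KD` is invertible and `T` is acyclic. Shifting the
grading of `C_j` by `j` makes `D` odd, and an acyclic odd differential on a finite-dimensional
`ℤ/2`-graded space maps the even part onto the odd cycles and the odd part onto the even cycles,
so both parts have the same dimension; this is `Σ_j (-1)^j χ(C_j) = 0`.
-/

open LinearMap Module Finset

namespace LinearMap

section Ring
variable {R V : Type*} [Ring R] [AddCommGroup V] [Module R V]

theorem ker_eq_range_of_isUnit_mul_add_mul {D K : Module.End R V} (hD : D * D = 0)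
    (hK : IsUnit (D * K + K * D)) : ker D = range D := by
  refine le_antisymm (fun x hx => ?_) (range_le_ker_iff.mpr hD)
  obtain ⟨u, hu⟩ := hK
  -- `D * D = 0` makes `u = DK + KD` commute with `D`, so a cycle `x = u⁻¹ (D (K x))` is a boundary.
  have hcomm : Commute D u := by
    rw [hu, Commute, SemiconjBy, mul_add, add_mul, ← mul_assoc, hD, ← mul_assoc, mul_assoc K,
      hD, zero_mul, mul_zero, zero_add, add_zero]
  have hux : (u : Module.End R V) x = D (K x) := by
    rw [hu, add_apply, Module.End.mul_apply, Module.End.mul_apply, mem_ker.mp hx, map_zero,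
      add_zero]
  refine ⟨(↑u⁻¹ : Module.End R V) (K x), ?_⟩
  rw [← Module.End.mul_apply, hcomm.units_inv_right.eq, Module.End.mul_apply, ← hux,
    ← Module.End.mul_apply, Units.inv_mul, Module.End.one_apply]

variable {D E : Module.End R V}

theorem ker_inf_range_eq_map_ker (hE : IsIdempotentElem E) (hDE : E * D + D * E = D)
    (hD : ker D = range D) : ker D ⊓ range E = (ker E).map D := by
  have hDE' : ∀ y, E (D y) = D y - D (E y) := fun y =>
    eq_sub_of_add_eq (LinearMap.congr_fun hDE y)
  refine le_antisymm ?_ ?_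
  · rintro x ⟨hxD, hxE⟩
    rw [SetLike.mem_coe, hD] at hxD
    obtain ⟨y, rfl⟩ := hxD
    refine ⟨y - E y, ?_, ?_⟩
    · rw [SetLike.mem_coe, mem_ker, map_sub, ← Module.End.mul_apply, hE.eq, sub_self]
    · rw [map_sub, ← hDE', hE.mem_range_iff.mp hxE]
  · rintro _ ⟨y, hy, rfl⟩
    refine ⟨hD ▸ mem_range_self D y, ?_⟩
    rw [SetLike.mem_coe, hE.mem_range_iff, hDE', mem_ker.mp hy, map_zero, sub_zero]

theorem ker_inf_ker_eq_map_range (hE : IsIdempotentElem E) (hDE : E * D + D * E = D)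
    (hD : ker D = range D) : ker D ⊓ ker E = (range E).map D := by
  have hDE' : (1 - E) * D + D * (1 - E) = D := by
    calc (1 - E) * D + D * (1 - E) = D + D - (E * D + D * E) := by noncomm_ring
      _ = D := by rw [hDE, add_sub_cancel_right]
  rw [hE.ker_eq_range_one_sub, hE.range_eq_ker_one_sub]
  exact ker_inf_range_eq_map_ker hE.one_sub hDE' hD

end Ring

theorem finrank_map_add_finrank_inf_ker {K V W : Type*} [DivisionRing K] [AddCommGroup V]
    [Module K V] [AddCommGroup W] [Module K W] [FiniteDimensional K V] (f : V →ₗ[K] W)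
    (p : Submodule K V) : finrank K (p.map f) + finrank K ↥(p ⊓ ker f) = finrank K p := by
  rw [← range_domRestrict, ← Submodule.map_comap_subtype, Submodule.finrank_map_subtype_eq,
    ← ker_domRestrict]
  exact finrank_range_add_finrank_ker _

theorem finrank_range_eq_finrank_ker_of_odd {K V : Type*} [DivisionRing K] [AddCommGroup V]
    [Module K V] [FiniteDimensional K V] {D E : Module.End K V} (hE : IsIdempotentElem E)
    (hDE : E * D + D * E = D) (hD : ker D = range D) :
    finrank K (range E) = finrank K (ker E) := by
  have h₀ := finrank_map_add_finrank_inf_ker D (range E)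
  have h₁ := finrank_map_add_finrank_inf_ker D (ker E)
  rw [inf_comm, ker_inf_range_eq_map_ker hE hDE hD] at h₀
  rw [inf_comm, ker_inf_ker_eq_map_range hE hDE hD] at h₁
  omega

end LinearMap

section PiMap
variable {R ι : Type*} {M N : ι → Type*}

section Semiring
variable [Semiring R] [∀ j, AddCommMonoid (M j)] [∀ j, Module R (M j)]
  [∀ j, AddCommMonoid (N j)] [∀ j, Module R (N j)]

theorem LinearMap.piMap_mul_piMap (g h : ∀ j, Module.End R (M j)) :
    piMap g * piMap h = piMap fun j => g j * h j :=
  rfl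

theorem LinearMap.range_piMap (g : ∀ j, M j →ₗ[R] N j) :
    range (piMap g) = Submodule.pi Set.univ fun j => range (g j) :=
  SetLike.coe_injective <| by simp only [coe_range, coe_piMap, Set.range_piMap, Submodule.coe_pi]

theorem LinearMap.ker_piMap (g : ∀ j, M j →ₗ[R] N j) :
    ker (piMap g) = Submodule.pi Set.univ fun j => ker (g j) := by
  ext x
  simp [funext_iff]

def Submodule.piUnivEquiv (p : ∀ j, Submodule R (M j)) :
    Submodule.pi Set.univ p ≃ₗ[R] ∀ j, p j where
  toFun x j := ⟨x.1 j, x.2 j (Set.mem_univ j)⟩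
  map_add' _ _ := rfl
  map_smul' _ _ := rfl
  invFun y := ⟨fun j => y j, fun j _ => (y j).2⟩
  left_inv _ := rfl
  right_inv _ := rfl

end Semiring

theorem Submodule.finrank_pi_univ [Fintype ι] {K : Type*} [DivisionRing K]
    [∀ j, AddCommGroup (M j)] [∀ j, Module K (M j)] [∀ j, FiniteDimensional K (M j)]
    (p : ∀ j, Submodule K (M j)) :
    finrank K (Submodule.pi Set.univ p) = ∑ j, finrank K (p j) := by
  rw [(Submodule.piUnivEquiv p).finrank_eq, Module.finrank_pi_fintype]

end PiMap

section BlockMap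
variable {R ι : Type*} {M : ι → Type*}

section Semiring
variable [Semiring R] [∀ j, AddCommMonoid (M j)] [∀ j, Module R (M j)]

variable [Fintype ι]

def blockMap (T : ∀ j l, M j →ₗ[R] M l) : Module.End R (∀ j, M j) :=
  LinearMap.pi fun l => ∑ j, T j l ∘ₗ LinearMap.proj j

@[simp]
theorem blockMap_apply (T : ∀ j l, M j →ₗ[R] M l) (x : ∀ j, M j) (l : ι) :
    blockMap T x l = ∑ j, T j l (x j) := by
  simp [blockMap]

theorem blockMap_mul (S T : ∀ j l, M j →ₗ[R] M l) :
    blockMap S * blockMap T = blockMap fun j l => ∑ k, S k l ∘ₗ T j k := by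
  ext x l
  simp only [Module.End.mul_apply, blockMap_apply, map_sum, LinearMap.sum_apply, comp_apply]
  exact Finset.sum_comm

theorem blockMap_add (S T : ∀ j l, M j →ₗ[R] M l) :
    blockMap (fun j l => S j l + T j l) = blockMap S + blockMap T := by
  ext x l
  simp [Finset.sum_add_distrib]

theorem blockMap_zero : blockMap (fun j l => (0 : M j →ₗ[R] M l)) = 0 := by
  ext x l
  simp

theorem piMap_mul_blockMap (g : ∀ j, Module.End R (M j)) (T : ∀ j l, M j →ₗ[R] M l) :
    piMap g * blockMap T = blockMap fun j l => g l ∘ₗ T j l := by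
  ext x l
  simp

theorem blockMap_mul_piMap (g : ∀ j, Module.End R (M j)) (T : ∀ j l, M j →ₗ[R] M l) :
    blockMap T * piMap g = blockMap fun j l => T j l ∘ₗ g j := by
  ext x l
  simp

end Semiring

variable [Fintype ι] [Ring R] [∀ j, AddCommGroup (M j)] [∀ j, Module R (M j)]

theorem isUnit_blockMap_of_triangular (ρ : ι → ℕ) (X : ∀ j l, M j →ₗ[R] M l)
    (hdiag : ∀ l, X l l = LinearMap.id) (hlow : ∀ j l, j ≠ l → ρ l ≤ ρ j → X j l = 0) :
    IsUnit (blockMap X) := by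
  -- `blockMap X - 1` pushes `{y | y l = 0 whenever ρ l < p}` into the same set for `p + 1`.
  have hstep : ∀ p (y : ∀ j, M j), (∀ l, ρ l < p → y l = 0) →
      ∀ l, ρ l < p + 1 → (blockMap X - 1) y l = 0 := by
    intro p y hy l hl
    rw [LinearMap.sub_apply, Pi.sub_apply, blockMap_apply, Finset.sum_eq_single l, hdiag,
      id_apply, Module.End.one_apply, sub_self]
    · intro j _ hjl
      rcases lt_or_ge (ρ j) p with hj | hj
      · rw [hy j hj, map_zero]
      · rw [hlow j l hjl (by omega), LinearMap.zero_apply]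
    · simp
  have hpow : ∀ p (y : ∀ j, M j) l, ρ l < p → ((blockMap X - 1) ^ p) y l = 0 := by
    intro p
    induction p with
    | zero => intro y l hl; omega
    | succ p ih => intro y l; rw [pow_succ', Module.End.mul_apply]; exact hstep p _ (ih y) l
  have hnil : IsNilpotent (blockMap X - 1) :=
    ⟨univ.sup ρ + 1, LinearMap.ext fun y => funext fun l =>
      hpow _ y l (Nat.lt_succ_of_le (Finset.le_sup (mem_univ l)))⟩
  simpa using hnil.isUnit_add_one

end BlockMap

section ParityShift
variable {V W : Type*} [AddCommGroup V] [Module (ZMod 2) V] [AddCommGroup W]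
  [Module (ZMod 2) W]

theorem add_smul_one_comp_add_comp_add_smul_one (φ : V →ₗ[ZMod 2] W)
    (eV : Module.End (ZMod 2) V) (eW : Module.End (ZMod 2) W) (a b : ZMod 2) :
    (eW + b • 1) ∘ₗ φ + φ ∘ₗ (eV + a • 1) = eW ∘ₗ φ + φ ∘ₗ eV + (a + b) • φ := by
  simp only [add_comp, comp_add, smul_comp, comp_smul, Module.End.one_eq_id, id_comp, comp_id,
    add_smul]
  abel

theorem IsIdempotentElem.add_smul_one {e : Module.End (ZMod 2) V} (he : IsIdempotentElem e)
    (c : ZMod 2) : IsIdempotentElem (e + c • 1) := by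
  obtain rfl | rfl : c = 0 ∨ c = 1 := by revert c; decide
  · simpa using he
  · simpa [add_comm e, ← ZModModule.sub_eq_add] using he.one_sub

theorem finrank_range_sub_finrank_ker_add_smul_one {e : Module.End (ZMod 2) V}
    (he : IsIdempotentElem e) (k : ℕ) :
    (finrank (ZMod 2) (range (e + (k : ZMod 2) • 1)) : ℤ) -
        finrank (ZMod 2) (ker (e + (k : ZMod 2) • 1)) =
      (-1) ^ k * ((finrank (ZMod 2) (range e) : ℤ) - finrank (ZMod 2) (ker e)) := by
  rcases k.even_or_odd with hk | hk
  · rw [ZMod.natCast_eq_zero_iff_even.mpr hk, zero_smul, add_zero, hk.neg_one_pow, one_mul]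
  · rw [ZMod.natCast_eq_one_iff_odd.mpr hk, one_smul, add_comm, ← ZModModule.sub_eq_add,
      ← he.ker_eq_range_one_sub, ← he.range_eq_ker_one_sub, hk.neg_one_pow]
    ring

end ParityShift

namespace ZMod
variable {n : ℕ} [NeZero n]

theorem val_sub_of_lt {a b : ZMod n} (h : a.val < b.val) : (a - b).val = n + a.val - b.val := by
  have hba : b - a ≠ 0 := sub_ne_zero.mpr fun hab => h.ne (congrArg val hab).symm
  rw [← neg_sub, neg_val, if_neg hba, val_sub h.le]
  have := b.val_lt
  omega

theorem sum_Ico_one_add_natCast {A : Type*} [AddCommMonoid A] (j : ZMod n) {r : ℕ}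
    (hr : r ≤ n) (g : ZMod n → A) :
    ∑ m ∈ Ico 1 r, g (j + m) = ∑ k ∈ univ.filter fun k => k ≠ j ∧ (k - j).val < r, g k := by
  have hval : ∀ m ∈ Ico 1 r, ((j + m) - j).val = m := fun m hm => by
    rw [add_sub_cancel_left, val_cast_of_lt ((mem_Ico.mp hm).2.trans_le hr)]
  refine sum_nbij' (fun m => j + m) (fun k => (k - j).val) (fun m hm => ?_) (fun k hk => ?_)
    hval (fun k _ => by simp) (fun _ _ => rfl)
  · have h := hval m hm
    have hm' := mem_Ico.mp hm
    simp only [mem_filter, mem_univ, true_and]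
    refine ⟨fun hj => ?_, h.symm ▸ hm'.2⟩
    rw [hj, sub_self, val_zero] at h
    omega
  · simp only [mem_filter, mem_univ, true_and] at hk
    rw [mem_Ico]
    exact ⟨Nat.one_le_iff_ne_zero.mpr ((val_ne_zero _).mpr (sub_ne_zero.mpr hk.1)), hk.2⟩

end ZMod

section ExactPolygon
variable {n : ℕ} [NeZero n] {M : ZMod n → Type*} [∀ j, AddCommGroup (M j)]
  [∀ j, Module (ZMod 2) (M j)]

/-- Indices live in `ZMod n`, and `f j (j + r)` is the paper's `f_{j+r}^j` for `0 < r ≤ n`;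
in particular `f j j` is `f_{j+n}^j`. -/
structure IsExactPolygon (d : ∀ j, Module.End (ZMod 2) (M j))
    (f : ∀ j k : ZMod n, M j →ₗ[ZMod 2] M k) : Prop where
  d_comp_self : ∀ j, d j ∘ₗ d j = 0
  sum_comp : ∀ (j : ZMod n) (r : ℕ), 1 ≤ r → r < n →
    (∑ m ∈ Ico 1 r, f (j + (m : ZMod n)) (j + (r : ZMod n)) ∘ₗ f j (j + (m : ZMod n))) =
      d (j + (r : ZMod n)) ∘ₗ f j (j + (r : ZMod n)) + f j (j + (r : ZMod n)) ∘ₗ d j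
  sum_comp_self : ∀ j : ZMod n,
    (∑ m ∈ Ico 1 n, f (j + (m : ZMod n)) j ∘ₗ f j (j + (m : ZMod n))) =
      d j ∘ₗ f j j + f j j ∘ₗ d j + LinearMap.id

namespace IsExactPolygon
variable {d : ∀ j, Module.End (ZMod 2) (M j)} {f : ∀ j k : ZMod n, M j →ₗ[ZMod 2] M k}

theorem sum_comp_of_ne (h : IsExactPolygon d f) {j l : ZMod n} (hjl : j ≠ l) :
    ∑ k ∈ univ.filter (fun k => k ≠ j ∧ (k - j).val < (l - j).val), f k l ∘ₗ f j k =
      d l ∘ₗ f j l + f j l ∘ₗ d j := by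
  have hl : j + ((l - j).val : ZMod n) = l := by rw [ZMod.natCast_zmod_val, add_sub_cancel]
  have hr : 1 ≤ (l - j).val :=
    Nat.one_le_iff_ne_zero.mpr ((ZMod.val_ne_zero _).mpr (sub_ne_zero.mpr hjl.symm))
  have := h.sum_comp j _ hr (ZMod.val_lt _)
  rwa [hl, ZMod.sum_Ico_one_add_natCast j (ZMod.val_lt _).le (fun k => f k l ∘ₗ f j k)] at this

theorem sum_comp_of_val_lt (h : IsExactPolygon d f) {j l : ZMod n} (hjl : j.val < l.val) :
    ∑ k ∈ univ.filter (fun k => j.val < k.val ∧ k.val < l.val), f k l ∘ₗ f j k =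
      d l ∘ₗ f j l + f j l ∘ₗ d j := by
  rw [← h.sum_comp_of_ne fun hjl' => hjl.ne (congrArg ZMod.val hjl')]
  refine sum_congr (filter_congr fun k _ => ?_) fun _ _ => rfl
  rw [ZMod.val_sub hjl.le, ← (ZMod.val_injective n).ne_iff]
  have := l.val_lt
  rcases lt_or_ge k.val j.val with hkj | hjk
  · rw [ZMod.val_sub_of_lt hkj]; omega
  · rw [ZMod.val_sub hjk]; omega

theorem sum_comp_of_val_gt (h : IsExactPolygon d f) {j l : ZMod n} (hlj : l.val < j.val) :
    ∑ k ∈ univ.filter (fun k => k.val < l.val ∨ j.val < k.val), f k l ∘ₗ f j k =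
      d l ∘ₗ f j l + f j l ∘ₗ d j := by
  rw [← h.sum_comp_of_ne fun hjl => hlj.ne (congrArg ZMod.val hjl).symm]
  refine sum_congr (filter_congr fun k _ => ?_) fun _ _ => rfl
  rw [ZMod.val_sub_of_lt hlj, ← (ZMod.val_injective n).ne_iff]
  have := j.val_lt
  have := k.val_lt
  rcases lt_or_ge k.val j.val with hkj | hjk
  · rw [ZMod.val_sub_of_lt hkj]; omega
  · rw [ZMod.val_sub hjk]; omega

theorem sum_comp_self' (h : IsExactPolygon d f) (j : ZMod n) :
    ∑ k ∈ univ.filter (fun k => k.val < j.val ∨ j.val < k.val), f k j ∘ₗ f j k =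
      d j ∘ₗ f j j + f j j ∘ₗ d j + LinearMap.id := by
  rw [← h.sum_comp_self j, ZMod.sum_Ico_one_add_natCast j le_rfl (fun k => f k j ∘ₗ f j k)]
  refine sum_congr (filter_congr fun k _ => ?_) fun _ _ => rfl
  rw [← (ZMod.val_injective n).ne_iff]
  have := (k - j).val_lt
  omega

end IsExactPolygon
end ExactPolygon

section Totalization
variable {n : ℕ} [NeZero n] {M : ZMod n → Type*} [∀ j, AddCommGroup (M j)]
  [∀ j, Module (ZMod 2) (M j)] (d : ∀ j, Module.End (ZMod 2) (M j))
  (f : ∀ j k : ZMod n, M j →ₗ[ZMod 2] M k)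

def upperBlocks (j l : ZMod n) : M j →ₗ[ZMod 2] M l := if j.val < l.val then f j l else 0

def lowerBlocks (j l : ZMod n) : M j →ₗ[ZMod 2] M l := if l.val ≤ j.val then f j l else 0

def totalDiff : Module.End (ZMod 2) (∀ j, M j) := piMap d + blockMap (upperBlocks f)

def totalHomotopy : Module.End (ZMod 2) (∀ j, M j) := blockMap (lowerBlocks f)

variable {d f}

theorem sum_upperBlocks_comp_upperBlocks (j l : ZMod n) :
    ∑ k, upperBlocks f k l ∘ₗ upperBlocks f j k =
      ∑ k ∈ univ.filter (fun k => j.val < k.val ∧ k.val < l.val), f k l ∘ₗ f j k := by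
  rw [sum_filter]
  refine sum_congr rfl fun k _ => ?_
  unfold upperBlocks
  split_ifs <;> first | omega | simp

theorem sum_upperBlocks_comp_lowerBlocks_add {j l : ZMod n} (hlj : l.val ≤ j.val) :
    ∑ k, upperBlocks f k l ∘ₗ lowerBlocks f j k + ∑ k, lowerBlocks f k l ∘ₗ upperBlocks f j k =
      ∑ k ∈ univ.filter (fun k => k.val < l.val ∨ j.val < k.val), f k l ∘ₗ f j k := by
  rw [← sum_add_distrib, sum_filter]
  refine sum_congr rfl fun k _ => ?_
  unfold upperBlocks lowerBlocks
  split_ifs <;> first | omega | simp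

theorem totalDiff_mul_self_eq :
    totalDiff d f * totalDiff d f = piMap (fun j => d j * d j) + blockMap fun j l =>
      d l ∘ₗ upperBlocks f j l + upperBlocks f j l ∘ₗ d j +
        ∑ k, upperBlocks f k l ∘ₗ upperBlocks f j k := by
  rw [blockMap_add, blockMap_add, totalDiff, add_mul, mul_add, mul_add, piMap_mul_piMap,
    piMap_mul_blockMap, blockMap_mul_piMap, blockMap_mul]
  abel

theorem totalDiff_mul_totalHomotopy_add :
    totalDiff d f * totalHomotopy f + totalHomotopy f * totalDiff d f = blockMap fun j l =>
      d l ∘ₗ lowerBlocks f j l + lowerBlocks f j l ∘ₗ d j +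
        (∑ k, upperBlocks f k l ∘ₗ lowerBlocks f j k +
          ∑ k, lowerBlocks f k l ∘ₗ upperBlocks f j k) := by
  rw [blockMap_add, blockMap_add, blockMap_add, totalDiff, totalHomotopy, add_mul, mul_add,
    piMap_mul_blockMap, blockMap_mul_piMap, blockMap_mul, blockMap_mul]
  abel

end Totalization

namespace IsExactPolygon
variable {n : ℕ} [NeZero n] {M : ZMod n → Type*} [∀ j, AddCommGroup (M j)]
  [∀ j, Module (ZMod 2) (M j)] {d : ∀ j, Module.End (ZMod 2) (M j)}
  {f : ∀ j k : ZMod n, M j →ₗ[ZMod 2] M k}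

theorem totalDiff_mul_self (h : IsExactPolygon d f) : totalDiff d f * totalDiff d f = 0 := by
  have hoff : ∀ j l, d l ∘ₗ upperBlocks f j l + upperBlocks f j l ∘ₗ d j +
      ∑ k, upperBlocks f k l ∘ₗ upperBlocks f j k = 0 := fun j l => by
    rw [sum_upperBlocks_comp_upperBlocks]
    by_cases hjl : j.val < l.val
    · rw [h.sum_comp_of_val_lt hjl, upperBlocks, if_pos hjl, ZModModule.add_self]
    · rw [upperBlocks, if_neg hjl, filter_false_of_mem fun k _ => by omega, sum_empty]
      simp
  rw [totalDiff_mul_self_eq, funext₂ hoff, blockMap_zero, add_zero]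
  exact LinearMap.ext fun x => funext fun j => LinearMap.congr_fun (h.d_comp_self j) (x j)

theorem isUnit_totalDiff_mul_add (h : IsExactPolygon d f) :
    IsUnit (totalDiff d f * totalHomotopy f + totalHomotopy f * totalDiff d f) := by
  rw [totalDiff_mul_totalHomotopy_add]
  refine isUnit_blockMap_of_triangular ZMod.val _ (fun l => ?_) (fun j l hjl hlj => ?_)
  · rw [sum_upperBlocks_comp_lowerBlocks_add le_rfl, h.sum_comp_self', lowerBlocks, if_pos le_rfl,
      ← add_assoc, ZModModule.add_self, zero_add]
  · have hlj' : l.val < j.val := lt_of_le_of_ne hlj fun hval => hjl (ZMod.val_injective n hval).symm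
    rw [sum_upperBlocks_comp_lowerBlocks_add hlj, h.sum_comp_of_val_gt hlj', lowerBlocks,
      if_pos hlj, ZModModule.add_self]

theorem ker_totalDiff_eq_range (h : IsExactPolygon d f) :
    ker (totalDiff d f) = range (totalDiff d f) :=
  ker_eq_range_of_isUnit_mul_add_mul h.totalDiff_mul_self h.isUnit_totalDiff_mul_add

end IsExactPolygon

section Grading
variable {n : ℕ} {M : ZMod n → Type*} [∀ j, AddCommGroup (M j)]
  [∀ j, Module (ZMod 2) (M j)]

/-- The grading of the total complex `⊕ C_j[j]`: the grading of `C_j` shifted by `j`. -/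
def totalGrading (e : ∀ j, Module.End (ZMod 2) (M j)) : Module.End (ZMod 2) (∀ j, M j) :=
  piMap fun j => e j + (j.val : ZMod 2) • 1

variable {e : ∀ j, Module.End (ZMod 2) (M j)}

theorem isIdempotentElem_totalGrading (he : ∀ j, IsIdempotentElem (e j)) :
    IsIdempotentElem (totalGrading e) := by
  rw [IsIdempotentElem, totalGrading, piMap_mul_piMap]
  exact congrArg piMap (funext fun j => ((he j).add_smul_one _).eq)

theorem natCast_sub_sub_one_add_add {j l : ℕ} (h : j < l) :
    ((l - j - 1 : ℕ) : ZMod 2) + l + j = 1 := by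
  obtain ⟨m, rfl⟩ := Nat.exists_eq_add_of_lt h
  rw [show j + m + 1 - j - 1 = m by omega]
  have h2 : (2 : ZMod 2) = 0 := rfl
  push_cast
  linear_combination (m + j : ZMod 2) * h2

theorem totalGrading_mul_totalDiff_add [NeZero n] {d : ∀ j, Module.End (ZMod 2) (M j)}
    {f : ∀ j k : ZMod n, M j →ₗ[ZMod 2] M k} (hdodd : ∀ j, d j ∘ₗ e j + e j ∘ₗ d j = d j)
    (hfdeg : ∀ j k : ZMod n, j.val < k.val →
      f j k ∘ₗ e j + e k ∘ₗ f j k = ((k.val - j.val - 1 : ℕ) : ZMod 2) • f j k) :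
    totalGrading e * totalDiff d f + totalDiff d f * totalGrading e = totalDiff d f := by
  have hdiag : ∀ j,
      (e j + (j.val : ZMod 2) • 1) * d j + d j * (e j + (j.val : ZMod 2) • 1) = d j := fun j => by
      rw [Module.End.mul_eq_comp, Module.End.mul_eq_comp,
        add_smul_one_comp_add_comp_add_smul_one, ZModModule.add_self, zero_smul, add_zero,
        add_comm, hdodd]
  have hoff : ∀ j l, (e l + (l.val : ZMod 2) • 1) ∘ₗ upperBlocks f j l +
      upperBlocks f j l ∘ₗ (e j + (j.val : ZMod 2) • 1) = upperBlocks f j l := fun j l => by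
    unfold upperBlocks
    split_ifs with hjl
    · rw [add_smul_one_comp_add_comp_add_smul_one, add_comm (e l ∘ₗ _), hfdeg j l hjl,
        ← add_smul, ← add_assoc, add_right_comm, natCast_sub_sub_one_add_add hjl, one_smul]
    · simp
  rw [totalDiff, mul_add, add_mul, add_add_add_comm, totalGrading, piMap_mul_piMap,
    piMap_mul_piMap, piMap_mul_blockMap, blockMap_mul_piMap, ← blockMap_add, funext₂ hoff]
  exact congrArg (· + _) (congrArg piMap (funext hdiag))

end Grading

/-- Let `(C_j, f_k^j)` be an exact `n`-gon over `𝔽₂` (encoded `n`-periodically as in the other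
statements), in which each `C_j` is finite-dimensional and `ℤ/2`-graded; the grading is encoded
by the idempotent `e j` projecting onto the even part, so that the even part is `range (e j)`
and the odd part is `ker (e j)`.  Assume each `d_j` is of odd degree and `f_k^j` has degree
`k − j − 1 (mod 2)` whenever `0 ≤ j < k ≤ n−1`.  Then `Σ_j (−1)^j χ(C_j) = 0`, where
`χ(C_j) = dim C_j⁰ − dim C_j¹`. -/
theorem stmt4 (n : ℕ) [NeZero n] (M : ZMod n → Type)
    [∀ j, AddCommGroup (M j)] [∀ j, Module (ZMod 2) (M j)]
    [∀ j, Module.Finite (ZMod 2) (M j)]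
    (d : ∀ j, M j →ₗ[ZMod 2] M j)
    (f : ∀ j k : ZMod n, M j →ₗ[ZMod 2] M k)
    (hd : ∀ j, d j ∘ₗ d j = 0)
    (hrel : ∀ (j : ZMod n) (r : ℕ), 1 ≤ r → r < n →
      (∑ m ∈ Finset.Ico 1 r,
          f (j + (m : ZMod n)) (j + (r : ZMod n)) ∘ₗ f j (j + (m : ZMod n))) =
        d (j + (r : ZMod n)) ∘ₗ f j (j + (r : ZMod n)) +
          f j (j + (r : ZMod n)) ∘ₗ d j)
    (hdiag : ∀ j : ZMod n,
      (∑ m ∈ Finset.Ico 1 n, f (j + (m : ZMod n)) j ∘ₗ f j (j + (m : ZMod n))) =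
        d j ∘ₗ f j j + f j j ∘ₗ d j + LinearMap.id)
    (e : ∀ j, M j →ₗ[ZMod 2] M j)
    (he : ∀ j, e j ∘ₗ e j = e j)
    (hdodd : ∀ j, d j ∘ₗ e j + e j ∘ₗ d j = d j)
    (hfdeg : ∀ j k : ZMod n, j.val < k.val →
      f j k ∘ₗ e j + e k ∘ₗ f j k = ((k.val - j.val - 1 : ℕ) : ZMod 2) • f j k) :
    ∑ j : ZMod n, (-1 : ℤ) ^ j.val *
      ((Module.finrank (ZMod 2) (LinearMap.range (e j)) : ℤ) -
        (Module.finrank (ZMod 2) (LinearMap.ker (e j)) : ℤ)) = 0 := by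
  have hexact : IsExactPolygon d f := ⟨hd, hrel, hdiag⟩
  have hrank := finrank_range_eq_finrank_ker_of_odd (isIdempotentElem_totalGrading he)
    (totalGrading_mul_totalDiff_add hdodd hfdeg) hexact.ker_totalDiff_eq_range
  rw [totalGrading, range_piMap, ker_piMap, Submodule.finrank_pi_univ,
    Submodule.finrank_pi_univ] at hrank
  calc ∑ j : ZMod n, (-1 : ℤ) ^ j.val *
        ((finrank (ZMod 2) (range (e j)) : ℤ) - finrank (ZMod 2) (ker (e j)))
      = ∑ j : ZMod n, ((finrank (ZMod 2) (range (e j + (j.val : ZMod 2) • 1)) : ℤ) -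
          finrank (ZMod 2) (ker (e j + (j.val : ZMod 2) • 1))) :=
        sum_congr rfl fun j _ => (finrank_range_sub_finrank_ker_add_smul_one (he j) j.val).symm
    _ = 0 := by rw [sum_sub_distrib, ← Nat.cast_sum, ← Nat.cast_sum, hrank, sub_self]
end

section
/- Let ({C_S}, {f_q}) be an exact n-cube over 𝔽₂. For 0 ≤ j ≤ n define C_j := ⊕_{S ⊆ [n], |S| = j} C_S, and for j < k ≤ n+j define f_k^j := Σ_{|S| = j mod appropriate periodicity, |T| = k mod} f^S_T (summing f^S_T over subsets S of size j̄ and T of size k̄, where indices are interpreted (n+1)-periodically). Then the complexes C_0, …, C_n together with the maps f_k^j form an exact (n+1)-gon. -/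
section aux
variable {n : ℕ}

lemma zval_sub (j : ZMod (n+1)) (b : ℕ) (hb : b ≤ n) :
    ((b : ZMod (n+1)) - j).val =
      if j.val ≤ b then b - j.val else b + (n+1) - j.val := by
  have hjn : j.val < n + 1 := ZMod.val_lt j
  have h1 : ((b : ZMod (n+1)) - j) = ((b + (n+1) - j.val : ℕ) : ZMod (n+1)) := by
    have hle : j.val ≤ b + (n+1) := by omega
    rw [Nat.cast_sub hle, Nat.cast_add, ZMod.natCast_self, add_zero, ZMod.natCast_val,
      ZMod.cast_id]
  rw [h1, ZMod.val_natCast]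
  by_cases h : j.val ≤ b
  · rw [if_pos h]
    have : b + (n+1) - j.val = (b - j.val) + (n+1) := by omega
    rw [this, Nat.add_mod_right, Nat.mod_eq_of_lt (by omega)]
  · rw [if_neg h, Nat.mod_eq_of_lt (by omega)]

lemma zval_add (j : ZMod (n+1)) (r : ℕ) (hr : r ≤ n + 1) :
    (j + (r : ZMod (n+1))).val =
      if j.val + r ≤ n then j.val + r else j.val + r - (n+1) := by
  have hjn : j.val < n + 1 := ZMod.val_lt j
  rcases Nat.lt_or_ge r (n+1) with h | h
  · rw [ZMod.val_add, ZMod.val_natCast, Nat.mod_eq_of_lt h]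
    by_cases h2 : j.val + r ≤ n
    · rw [if_pos h2, Nat.mod_eq_of_lt (by omega)]
    · rw [if_neg h2]
      rw [Nat.mod_eq_sub_mod (by omega), Nat.mod_eq_of_lt (by omega)]
  · have hr1 : r = n + 1 := by omega
    subst hr1
    simp only [Nat.cast_add, Nat.cast_one, ZMod.natCast_self]
    rw [if_neg (by omega)]
    simp

lemma card_eq_iff_zmod (j : ZMod (n+1)) (m b : ℕ) (hm : m < n + 1) (hb : b < n + 1) :
    b = (j + (m : ZMod (n+1))).val ↔ m = ((b : ZMod (n+1)) - j).val := by
  constructor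
  · rintro rfl
    have h1 : (((j + (m : ZMod (n+1))).val : ℕ) : ZMod (n+1)) = j + m := by
      rw [ZMod.natCast_val, ZMod.cast_id]
    rw [h1, add_sub_cancel_left, ZMod.val_natCast, Nat.mod_eq_of_lt hm]
  · rintro rfl
    have h1 : ((((b : ZMod (n+1)) - j).val : ℕ) : ZMod (n+1)) = (b : ZMod (n+1)) - j := by
      rw [ZMod.natCast_val, ZMod.cast_id]
    rw [h1, add_sub_cancel, ZMod.val_natCast, Nat.mod_eq_of_lt hb]

lemma sum_filter_congr_of_zero {M : Type*} [AddCommMonoid M] {α : Type*} [Fintype α]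
    (A B : α → Prop) [DecidablePred A] [DecidablePred B] (g : α → M)
    (h : ∀ x, ¬(A x ↔ B x) → g x = 0) :
    ∑ x ∈ Finset.univ.filter A, g x = ∑ x ∈ Finset.univ.filter B, g x := by
  rw [Finset.sum_filter, Finset.sum_filter]
  refine Finset.sum_congr rfl fun x _ => ?_
  by_cases hA : A x <;> by_cases hB : B x <;> simp only [if_pos, if_neg, hA, hB, if_true, if_false]
  · exact h x (by tauto)
  · exact (h x (by tauto)).symm

lemma reindex {M : Type*} [AddCommMonoid M] (j : ZMod (n+1)) (r : ℕ) (hr : r ≤ n + 1)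
    (g : Finset (Fin n) → M) :
    (∑ m ∈ Finset.Ico 1 r,
      ∑ R : {R : Finset (Fin n) // R.card = (j + (m : ZMod (n+1))).val}, g R.1)
    = ∑ R ∈ Finset.univ.filter (fun R : Finset (Fin n) =>
        1 ≤ ((R.card : ZMod (n+1)) - j).val ∧ ((R.card : ZMod (n+1)) - j).val < r), g R := by
  have hcard : ∀ R : Finset (Fin n), R.card ≤ n := by
    intro R
    simpa using Finset.card_le_univ R
  have step1 : ∀ c : ℕ, (∑ R : {R : Finset (Fin n) // R.card = c}, g R.1)
      = ∑ R ∈ Finset.univ.filter (fun R => R.card = c), g R := by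
    intro c
    exact (Finset.sum_subtype _ (by simp) g).symm
  simp only [step1]
  simp only [Finset.sum_filter]
  rw [Finset.sum_comm]
  refine Finset.sum_congr rfl fun R _ => ?_
  have key : ∀ m ∈ Finset.Ico 1 r,
      (if R.card = (j + (m : ZMod (n+1))).val then g R else 0)
      = if m = ((R.card : ZMod (n+1)) - j).val then g R else 0 := by
    intro m hm
    rw [Finset.mem_Ico] at hm
    exact if_congr (card_eq_iff_zmod j m R.card (by omega) (by have := hcard R; omega)) rfl rfl
  rw [Finset.sum_congr rfl key, Finset.sum_ite_eq' (Finset.Ico 1 r)]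
  simp [Finset.mem_Ico]


section key
variable {n : ℕ} {CS : Finset (Fin n) → Type}
  [∀ S, AddCommGroup (CS S)] [∀ S, Module (ZMod 2) (CS S)]
  {dS : ∀ S, CS S →ₗ[ZMod 2] CS S}
  {F : ∀ S T, CS S →ₗ[ZMod 2] CS T}

lemma keyMid
    (hF0 : ∀ S T : Finset (Fin n), ¬(S ⊂ T ∨ T.card ≤ S.card) → F S T = 0)
    (h1 : ∀ S T : Finset (Fin n), S ⊂ T →
      dS T ∘ₗ F S T + F S T ∘ₗ dS S =
        ∑ R ∈ Finset.univ.filter (fun R : Finset (Fin n) => S ⊂ R ∧ R ⊂ T),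
          F R T ∘ₗ F S R)
    (h2 : ∀ S T : Finset (Fin n), T.card ≤ S.card → S ≠ T →
      dS T ∘ₗ F S T + F S T ∘ₗ dS S =
        ∑ R ∈ Finset.univ.filter (fun R : Finset (Fin n) => S ⊂ R ∨ R ⊂ T),
          F R T ∘ₗ F S R)
    (j : ZMod (n+1)) (r : ℕ) (hr1 : 1 ≤ r) (hrn : r ≤ n)
    (S T : Finset (Fin n)) (hS : S.card = j.val) (hT : T.card = (j + (r : ZMod (n+1))).val)
    (v : CS S) :
    (∑ m ∈ Finset.Ico 1 r, ∑ R : {R : Finset (Fin n) // R.card = (j + (m : ZMod (n+1))).val},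
        F R.1 T (F S R.1 v))
      = dS T (F S T v) + F S T (dS S v) := by
  have hcard : ∀ R : Finset (Fin n), R.card ≤ n := fun R => by simpa using Finset.card_le_univ R
  have han : j.val < n + 1 := ZMod.val_lt j
  rw [reindex j r (by omega) (fun R => F R T (F S R v))]
  rw [zval_add j r (by omega)] at hT
  have hpos : ∀ R : Finset (Fin n), ((R.card : ZMod (n+1)) - j).val
      = if j.val ≤ R.card then R.card - j.val else R.card + (n+1) - j.val :=
    fun R => zval_sub j R.card (hcard R)
  by_cases hc : j.val + r ≤ n
  · rw [if_pos hc] at hT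
    by_cases hST : S ⊂ T
    · have hh := LinearMap.congr_fun (h1 S T hST) v
      simp only [LinearMap.add_apply, LinearMap.comp_apply, LinearMap.sum_apply] at hh
      rw [hh]
      refine sum_filter_congr_of_zero _ _ _ fun R hR => ?_
      have hb := hcard R
      have hBA : (S ⊂ R ∧ R ⊂ T) →
          (1 ≤ ((R.card : ZMod (n+1)) - j).val ∧ ((R.card : ZMod (n+1)) - j).val < r) := by
        rintro ⟨h1', h2'⟩
        have hx := Finset.card_lt_card h1'
        have hy := Finset.card_lt_card h2'
        rw [hpos R]; split <;> omega
      have hA : 1 ≤ ((R.card : ZMod (n+1)) - j).val ∧ ((R.card : ZMod (n+1)) - j).val < r := by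
        by_contra hA'
        exact hR (iff_of_false hA' (fun hB => hA' (hBA hB)))
      have hNB : ¬(S ⊂ R ∧ R ⊂ T) := fun hB => hR (iff_of_true (hBA hB) hB)
      rw [hpos R] at hA
      have hbrange : j.val < R.card ∧ R.card < j.val + r := by
        by_cases hab : j.val ≤ R.card
        · rw [if_pos hab] at hA; omega
        · rw [if_neg hab] at hA; omega
      rcases not_and_or.mp hNB with h' | h'
      · rw [hF0 S R (by push_neg; exact ⟨h', by omega⟩)]; simp
      · rw [hF0 R T (by push_neg; exact ⟨h', by omega⟩)]; simp
    · have hFST : F S T = 0 := hF0 S T (by push_neg; exact ⟨hST, by omega⟩)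
      rw [hFST]
      simp only [LinearMap.zero_apply, map_zero, add_zero]
      refine Finset.sum_eq_zero fun R hR => ?_
      rw [Finset.mem_filter] at hR
      obtain ⟨-, hA⟩ := hR
      rw [hpos R] at hA
      have hb := hcard R
      have hbrange : j.val < R.card ∧ R.card < j.val + r := by
        by_cases hab : j.val ≤ R.card
        · rw [if_pos hab] at hA; omega
        · rw [if_neg hab] at hA; omega
      by_cases hSR : S ⊂ R
      · by_cases hRT : R ⊂ T
        · exact absurd (hSR.trans hRT) hST
        · rw [hF0 R T (by push_neg; exact ⟨hRT, by omega⟩)]; simp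
      · rw [hF0 S R (by push_neg; exact ⟨hSR, by omega⟩)]; simp
  · rw [if_neg hc] at hT
    have hne : S ≠ T := fun h => by rw [h] at hS; omega
    have hh := LinearMap.congr_fun (h2 S T (by omega) hne) v
    simp only [LinearMap.add_apply, LinearMap.comp_apply, LinearMap.sum_apply] at hh
    rw [hh]
    refine sum_filter_congr_of_zero _ _ _ fun R hR => ?_
    have hb := hcard R
    have hBA : (S ⊂ R ∨ R ⊂ T) →
        (1 ≤ ((R.card : ZMod (n+1)) - j).val ∧ ((R.card : ZMod (n+1)) - j).val < r) := by
      intro hB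
      rw [hpos R]
      rcases hB with h' | h'
      · have hx := Finset.card_lt_card h'; split <;> omega
      · have hx := Finset.card_lt_card h'; split <;> omega
    have hA : 1 ≤ ((R.card : ZMod (n+1)) - j).val ∧ ((R.card : ZMod (n+1)) - j).val < r := by
      by_contra hA'
      exact hR (iff_of_false hA' (fun hB => hA' (hBA hB)))
    have hNB : ¬(S ⊂ R ∨ R ⊂ T) := fun hB => hR (iff_of_true (hBA hB) hB)
    push_neg at hNB
    rw [hpos R] at hA
    by_cases hab : j.val ≤ R.card
    · rw [if_pos hab] at hA
      rw [hF0 S R (by push_neg; exact ⟨hNB.1, by omega⟩)]; simp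
    · rw [if_neg hab] at hA
      rw [hF0 R T (by push_neg; exact ⟨hNB.2, by omega⟩)]; simp

lemma keyWrapOff
    (hF0 : ∀ S T : Finset (Fin n), ¬(S ⊂ T ∨ T.card ≤ S.card) → F S T = 0)
    (h2 : ∀ S T : Finset (Fin n), T.card ≤ S.card → S ≠ T →
      dS T ∘ₗ F S T + F S T ∘ₗ dS S =
        ∑ R ∈ Finset.univ.filter (fun R : Finset (Fin n) => S ⊂ R ∨ R ⊂ T),
          F R T ∘ₗ F S R)
    (j : ZMod (n+1))
    (S T : Finset (Fin n)) (hS : S.card = j.val) (hT : T.card = j.val) (hne : S ≠ T)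
    (v : CS S) :
    (∑ m ∈ Finset.Ico 1 (n+1), ∑ R : {R : Finset (Fin n) // R.card = (j + (m : ZMod (n+1))).val},
        F R.1 T (F S R.1 v))
      = dS T (F S T v) + F S T (dS S v) := by
  have hcard : ∀ R : Finset (Fin n), R.card ≤ n := fun R => by simpa using Finset.card_le_univ R
  have han : j.val < n + 1 := ZMod.val_lt j
  rw [reindex j (n+1) le_rfl (fun R => F R T (F S R v))]
  have hpos : ∀ R : Finset (Fin n), ((R.card : ZMod (n+1)) - j).val
      = if j.val ≤ R.card then R.card - j.val else R.card + (n+1) - j.val :=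
    fun R => zval_sub j R.card (hcard R)
  have hh := LinearMap.congr_fun (h2 S T (by omega) hne) v
  simp only [LinearMap.add_apply, LinearMap.comp_apply, LinearMap.sum_apply] at hh
  rw [hh]
  refine sum_filter_congr_of_zero _ _ _ fun R hR => ?_
  have hb := hcard R
  have hBA : (S ⊂ R ∨ R ⊂ T) →
      (1 ≤ ((R.card : ZMod (n+1)) - j).val ∧ ((R.card : ZMod (n+1)) - j).val < n+1) := by
    intro hB
    rw [hpos R]
    rcases hB with h' | h'
    · have hx := Finset.card_lt_card h'; split <;> omega
    · have hx := Finset.card_lt_card h'; split <;> omega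
  have hA : 1 ≤ ((R.card : ZMod (n+1)) - j).val ∧ ((R.card : ZMod (n+1)) - j).val < n+1 := by
    by_contra hA'
    exact hR (iff_of_false hA' (fun hB => hA' (hBA hB)))
  have hNB : ¬(S ⊂ R ∨ R ⊂ T) := fun hB => hR (iff_of_true (hBA hB) hB)
  push_neg at hNB
  rw [hpos R] at hA
  by_cases hab : j.val ≤ R.card
  · rw [if_pos hab] at hA
    rw [hF0 S R (by push_neg; exact ⟨hNB.1, by omega⟩)]; simp
  · rw [hF0 R T (by push_neg; exact ⟨hNB.2, by omega⟩)]; simp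

lemma keyWrapDiag
    (hF0 : ∀ S T : Finset (Fin n), ¬(S ⊂ T ∨ T.card ≤ S.card) → F S T = 0)
    (h3 : ∀ S : Finset (Fin n),
      dS S ∘ₗ F S S + F S S ∘ₗ dS S =
        LinearMap.id +
          ∑ R ∈ Finset.univ.filter (fun R : Finset (Fin n) => S ⊂ R ∨ R ⊂ S),
            F R S ∘ₗ F S R)
    (j : ZMod (n+1))
    (S : Finset (Fin n)) (hS : S.card = j.val)
    (v : CS S) :
    (∑ m ∈ Finset.Ico 1 (n+1), ∑ R : {R : Finset (Fin n) // R.card = (j + (m : ZMod (n+1))).val},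
        F R.1 S (F S R.1 v))
      = dS S (F S S v) + F S S (dS S v) + v := by
  have hcard : ∀ R : Finset (Fin n), R.card ≤ n := fun R => by simpa using Finset.card_le_univ R
  have han : j.val < n + 1 := ZMod.val_lt j
  rw [reindex j (n+1) le_rfl (fun R => F R S (F S R v))]
  have hpos : ∀ R : Finset (Fin n), ((R.card : ZMod (n+1)) - j).val
      = if j.val ≤ R.card then R.card - j.val else R.card + (n+1) - j.val :=
    fun R => zval_sub j R.card (hcard R)
  have hh := LinearMap.congr_fun (h3 S) v
  simp only [LinearMap.add_apply, LinearMap.comp_apply, LinearMap.sum_apply,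
    LinearMap.id_apply] at hh
  have hstep : (∑ R ∈ Finset.univ.filter (fun R : Finset (Fin n) =>
        1 ≤ ((R.card : ZMod (n+1)) - j).val ∧ ((R.card : ZMod (n+1)) - j).val < n+1),
        F R S (F S R v))
      = ∑ R ∈ Finset.univ.filter (fun R : Finset (Fin n) => S ⊂ R ∨ R ⊂ S),
        F R S (F S R v) := by
    refine sum_filter_congr_of_zero _ _ _ fun R hR => ?_
    have hb := hcard R
    have hBA : (S ⊂ R ∨ R ⊂ S) →
        (1 ≤ ((R.card : ZMod (n+1)) - j).val ∧ ((R.card : ZMod (n+1)) - j).val < n+1) := by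
      intro hB
      rw [hpos R]
      rcases hB with h' | h'
      · have hx := Finset.card_lt_card h'; split <;> omega
      · have hx := Finset.card_lt_card h'; split <;> omega
    have hA : 1 ≤ ((R.card : ZMod (n+1)) - j).val ∧ ((R.card : ZMod (n+1)) - j).val < n+1 := by
      by_contra hA'
      exact hR (iff_of_false hA' (fun hB => hA' (hBA hB)))
    have hNB : ¬(S ⊂ R ∨ R ⊂ S) := fun hB => hR (iff_of_true (hBA hB) hB)
    push_neg at hNB
    rw [hpos R] at hA
    by_cases hab : j.val ≤ R.card
    · rw [if_pos hab] at hA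
      rw [hF0 S R (by push_neg; exact ⟨hNB.1, by omega⟩)]; simp
    · rw [hF0 R S (by push_neg; exact ⟨hNB.2, by omega⟩)]; simp
  rw [hstep, hh]
  have hvv : v + v = (0 : CS S) := by
    have h2v : (2 : ZMod 2) • v = 0 := by rw [show (2 : ZMod 2) = 0 by decide, zero_smul]
    rwa [two_smul] at h2v
  rw [add_comm v, add_assoc, hvv, add_zero]

end key

/-- Any exact `n`-cube over `𝔽₂` gives rise to an exact `(n+1)`-gon.  The cube is encoded by
the chain complexes `(CS S, dS S)` for `S ⊆ [n]` together with the total path-maps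
`F S T : CS S →ₗ CS T` (the sum `f^S_T` of the maps `f_q` over all paths `q : S → T` of length
at most `n+1` in the graph `G_n`; such a path exists iff `S ⊊ T` or `|T| ≤ |S|`, and `F S T = 0`
otherwise), satisfying the exact-`n`-cube relations (1)–(3).  The `(n+1)`-gon has, at the
residue `j : ZMod (n+1)`, the complex `C_j = ⊕_{|S| = j} C_S` with differential `Dgon j`, and
the gon maps `Fgon j k = Σ_{|S|=j, |T|=k} f^S_T`; the conclusion asserts the exact
`(n+1)`-gon relations (with the identity appearing for the full wrap-around maps). -/
theorem stmt6 (n : ℕ) (CS : Finset (Fin n) → Type)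
    [∀ S, AddCommGroup (CS S)] [∀ S, Module (ZMod 2) (CS S)]
    (dS : ∀ S, CS S →ₗ[ZMod 2] CS S)
    (F : ∀ S T, CS S →ₗ[ZMod 2] CS T)
    (hdd : ∀ S, dS S ∘ₗ dS S = 0)
    (hF0 : ∀ S T : Finset (Fin n), ¬(S ⊂ T ∨ T.card ≤ S.card) → F S T = 0)
    (h1 : ∀ S T : Finset (Fin n), S ⊂ T →
      dS T ∘ₗ F S T + F S T ∘ₗ dS S =
        ∑ R ∈ Finset.univ.filter (fun R : Finset (Fin n) => S ⊂ R ∧ R ⊂ T),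
          F R T ∘ₗ F S R)
    (h2 : ∀ S T : Finset (Fin n), T.card ≤ S.card → S ≠ T →
      dS T ∘ₗ F S T + F S T ∘ₗ dS S =
        ∑ R ∈ Finset.univ.filter (fun R : Finset (Fin n) => S ⊂ R ∨ R ⊂ T),
          F R T ∘ₗ F S R)
    (h3 : ∀ S : Finset (Fin n),
      dS S ∘ₗ F S S + F S S ∘ₗ dS S =
        LinearMap.id +
          ∑ R ∈ Finset.univ.filter (fun R : Finset (Fin n) => S ⊂ R ∨ R ⊂ S),
            F R S ∘ₗ F S R)
    (Dgon : ∀ j : ZMod (n + 1),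
      (∀ S : {S : Finset (Fin n) // S.card = j.val}, CS S.1) →ₗ[ZMod 2]
        ∀ S : {S : Finset (Fin n) // S.card = j.val}, CS S.1)
    (hDgon : ∀ j, Dgon j = LinearMap.pi
      (fun T : {S : Finset (Fin n) // S.card = j.val} => dS T.1 ∘ₗ LinearMap.proj T))
    (Fgon : ∀ j k : ZMod (n + 1),
      (∀ S : {S : Finset (Fin n) // S.card = j.val}, CS S.1) →ₗ[ZMod 2]
        ∀ T : {T : Finset (Fin n) // T.card = k.val}, CS T.1)
    (hFgon : ∀ j k, Fgon j k = LinearMap.pi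
      (fun T : {T : Finset (Fin n) // T.card = k.val} =>
        ∑ S : {S : Finset (Fin n) // S.card = j.val}, F S.1 T.1 ∘ₗ LinearMap.proj S)) :
    (∀ j, Dgon j ∘ₗ Dgon j = 0) ∧
    (∀ (j : ZMod (n + 1)) (r : ℕ), 1 ≤ r → r < n + 1 →
      (∑ m ∈ Finset.Ico 1 r,
          Fgon (j + (m : ZMod (n + 1))) (j + (r : ZMod (n + 1))) ∘ₗ
            Fgon j (j + (m : ZMod (n + 1)))) =
        Dgon (j + (r : ZMod (n + 1))) ∘ₗ Fgon j (j + (r : ZMod (n + 1))) +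
          Fgon j (j + (r : ZMod (n + 1))) ∘ₗ Dgon j) ∧
    (∀ j : ZMod (n + 1),
      (∑ m ∈ Finset.Ico 1 (n + 1),
          Fgon (j + (m : ZMod (n + 1))) j ∘ₗ Fgon j (j + (m : ZMod (n + 1)))) =
        Dgon j ∘ₗ Fgon j j + Fgon j j ∘ₗ Dgon j + LinearMap.id) := by
  refine ⟨?_, ?_, ?_⟩
  · intro j
    rw [hDgon]
    refine LinearMap.ext fun x => ?_
    funext T
    simp only [LinearMap.comp_apply, LinearMap.pi_apply, LinearMap.proj_apply,
      LinearMap.zero_apply, Pi.zero_apply]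
    simpa using LinearMap.congr_fun (hdd T.1) (x T)
  · intro j r hr1 hr2
    simp only [hDgon, hFgon]
    refine LinearMap.ext fun x => ?_
    funext T
    simp only [LinearMap.sum_apply, LinearMap.comp_apply, LinearMap.pi_apply,
      LinearMap.add_apply, Finset.sum_apply, LinearMap.proj_apply, map_sum, Pi.add_apply]
    have hswap : ∀ m : ℕ,
        (∑ R : {R : Finset (Fin n) // R.card = (j + (m : ZMod (n+1))).val},
          ∑ S : {S : Finset (Fin n) // S.card = j.val}, F R.1 T.1 (F S.1 R.1 (x S)))
        = ∑ S : {S : Finset (Fin n) // S.card = j.val},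
            ∑ R : {R : Finset (Fin n) // R.card = (j + (m : ZMod (n+1))).val},
              F R.1 T.1 (F S.1 R.1 (x S)) := fun m => Finset.sum_comm
    rw [Finset.sum_congr rfl (fun m _ => hswap m), Finset.sum_comm, ← Finset.sum_add_distrib]
    refine Finset.sum_congr rfl fun S _ => ?_
    exact keyMid hF0 h1 h2 j r hr1 (by omega) S.1 T.1 S.2 T.2 (x S)
  · intro j
    simp only [hDgon, hFgon]
    refine LinearMap.ext fun x => ?_
    funext T
    simp only [LinearMap.sum_apply, LinearMap.comp_apply, LinearMap.pi_apply,
      LinearMap.add_apply, Finset.sum_apply, LinearMap.proj_apply, map_sum, Pi.add_apply,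
      LinearMap.id_apply]
    have hswap : ∀ m : ℕ,
        (∑ R : {R : Finset (Fin n) // R.card = (j + (m : ZMod (n+1))).val},
          ∑ S : {S : Finset (Fin n) // S.card = j.val}, F R.1 T.1 (F S.1 R.1 (x S)))
        = ∑ S : {S : Finset (Fin n) // S.card = j.val},
            ∑ R : {R : Finset (Fin n) // R.card = (j + (m : ZMod (n+1))).val},
              F R.1 T.1 (F S.1 R.1 (x S)) := fun m => Finset.sum_comm
    rw [Finset.sum_congr rfl (fun m _ => hswap m), Finset.sum_comm, ← Finset.sum_add_distrib]
    rw [← Finset.add_sum_erase _ _ (Finset.mem_univ T), ← Finset.add_sum_erase _ _ (Finset.mem_univ T)]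
    have hdiag := keyWrapDiag hF0 h3 j T.1 T.2 (x T)
    have hoff : ∀ S ∈ Finset.univ.erase T,
        (∑ m ∈ Finset.Ico 1 (n+1),
          ∑ R : {R : Finset (Fin n) // R.card = (j + (m : ZMod (n+1))).val},
            F R.1 T.1 (F S.1 R.1 (x S)))
        = dS T.1 (F S.1 T.1 (x S)) + F S.1 T.1 (dS S.1 (x S)) := fun S hS =>
      keyWrapOff hF0 h2 j S.1 T.1 S.2 T.2
        (fun h => (Finset.mem_erase.mp hS).1 (Subtype.ext h)) (x S)
    rw [hdiag, Finset.sum_congr rfl hoff]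
    abel
end aux
end

section
/- Let N ≥ 1 and let Δ ⊂ 𝔱 = {t ∈ ℝ^N : Σ t_i = 0} be the set of t with t_1 ≤ t_2 ≤ ⋯ ≤ t_N ≤ t_1 + 1. Suppose t, t' ∈ Δ and there exist σ ∈ S_N and k ∈ ℤ^N with Σ k_i = 0 such that t'_i = t_{σ(i)} − k_{σ(i)} for all i. Then t = t'. -/
/-- The closed alcove `Δ = {t ∈ 𝔱 : t₁ ≤ t₂ ≤ ⋯ ≤ t_N ≤ t₁ + 1}` is a strict fundamental
domain for the action of `W ⋉ L` on the trace-zero hyperplane `𝔱 ⊂ ℝ^N`: two points of `Δ`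
in the same orbit coincide. -/
theorem stmt8 (N : ℕ) (hN : 0 < N) (t t' : Fin N → ℝ)
    (ht0 : ∑ i, t i = 0) (ht'0 : ∑ i, t' i = 0)
    (htm : ∀ a b : Fin N, a ≤ b → t a ≤ t b)
    (ht'm : ∀ a b : Fin N, a ≤ b → t' a ≤ t' b)
    (htw : t ⟨N - 1, by omega⟩ ≤ t ⟨0, hN⟩ + 1)
    (ht'w : t' ⟨N - 1, by omega⟩ ≤ t' ⟨0, hN⟩ + 1)
    (σ : Equiv.Perm (Fin N)) (k : Fin N → ℤ) (hk : ∑ i, k i = 0)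
    (h : ∀ i, t' i = t (σ i) - (k (σ i) : ℝ)) :
    t = t' := by
  classical
  set tmin := t ⟨0, hN⟩ with htmin
  set tmax := t ⟨N - 1, by omega⟩ with htmax
  have hminle : ∀ a, tmin ≤ t a := fun a =>
    htm _ a (by simp [Fin.le_def])
  have hmaxge : ∀ a, t a ≤ tmax := fun a =>
    htm a _ (by have := a.isLt; simp [Fin.le_def]; omega)
  have hb : ∀ a b : Fin N, t a ≤ t b + 1 := by
    intro a b
    have h1 := hmaxge a
    have h2 := hminle b
    linarith [htw]
  have hb' : ∀ a b : Fin N, t' a ≤ t' b + 1 := by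
    intro a b
    have h1 : t' a ≤ t' ⟨N - 1, by omega⟩ :=
      ht'm a _ (by have := a.isLt; simp [Fin.le_def]; omega)
    have h2 : t' ⟨0, hN⟩ ≤ t' b := ht'm _ b (by simp [Fin.le_def])
    linarith [ht'w]
  -- key pair lemma
  have pair : ∀ p q : Fin N, 1 ≤ k p → k q ≤ -1 →
      k p = 1 ∧ k q = -1 ∧ t p = tmax ∧ t q = tmin ∧ tmax = tmin + 1 := by
    intro p q hp hq
    have e1 : t' (σ.symm p) = t p - (k p : ℝ) := by
      rw [h (σ.symm p), Equiv.apply_symm_apply]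
    have e2 : t' (σ.symm q) = t q - (k q : ℝ) := by
      rw [h (σ.symm q), Equiv.apply_symm_apply]
    have hA : t' (σ.symm q) ≤ t' (σ.symm p) + 1 := hb' _ _
    rw [e1, e2] at hA
    have hB : t p ≤ t q + 1 := hb p q
    have hk2 : (k p : ℝ) - (k q : ℝ) ≤ 2 := by linarith
    have hk2' : k p - k q ≤ 2 := by exact_mod_cast hk2
    have hkp : k p = 1 := by omega
    have hkq : k q = -1 := by omega
    have htpq : t p = t q + 1 := by
      rw [hkp, hkq] at hA; push_cast at hA; linarith
    have h3 : t p ≤ tmax := hmaxge p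
    have h4 : tmin ≤ t q := hminle q
    have h5 : tmax ≤ tmin + 1 := htw
    exact ⟨hkp, hkq, by linarith, by linarith, by linarith⟩
  set g : Fin N → ℝ := fun j => t j - (k j : ℝ) with hg
  obtain ⟨τ, hτ⟩ : ∃ τ : Equiv.Perm (Fin N), ∀ j, g (τ j) = t j := by
    by_cases hall : ∀ j, k j = 0
    · exact ⟨Equiv.refl _, fun j => by simp [hg, hall j]⟩
    · push_neg at hall
      obtain ⟨j0, hj0⟩ := hall
      obtain ⟨p0, hp0⟩ : ∃ p, 1 ≤ k p := by
        by_contra hc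
        push_neg at hc
        have hnp : ∀ j ∈ Finset.univ, k j ≤ 0 := fun j _ => by have := hc j; omega
        exact hj0 ((Finset.sum_eq_zero_iff_of_nonpos hnp).mp hk j0 (Finset.mem_univ _))
      obtain ⟨q0, hq0⟩ : ∃ q, k q ≤ -1 := by
        by_contra hc
        push_neg at hc
        have hnp : ∀ j ∈ Finset.univ, 0 ≤ k j := fun j _ => by have := hc j; omega
        exact hj0 ((Finset.sum_eq_zero_iff_of_nonneg hnp).mp hk j0 (Finset.mem_univ _))
      have hgap : tmax = tmin + 1 := (pair p0 q0 hp0 hq0).2.2.2.2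
      have hP : ∀ j, k j = 1 → t j = tmax := fun j hj =>
        (pair j q0 (by omega) hq0).2.2.1
      have hQ : ∀ j, k j = -1 → t j = tmin := fun j hj =>
        (pair p0 j hp0 (by omega)).2.2.2.1
      have htri : ∀ j, k j = 1 ∨ k j = 0 ∨ k j = -1 := by
        intro j
        rcases lt_trichotomy (k j) 0 with hlt | heq | hgt
        · right; right; exact (pair p0 j hp0 (by omega)).2.1
        · right; left; exact heq
        · left; exact (pair j q0 (by omega) hq0).1
      set P : Finset (Fin N) := Finset.univ.filter (fun j => k j = 1) with hPdef
      set Q : Finset (Fin N) := Finset.univ.filter (fun j => k j = -1) with hQdef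
      have hmemP : ∀ j, j ∈ P ↔ k j = 1 := fun j => by simp [hPdef]
      have hmemQ : ∀ j, j ∈ Q ↔ k j = -1 := fun j => by simp [hQdef]
      have hcard : P.card = Q.card := by
        have hsum : ∑ j, k j =
            ∑ j, ((if k j = 1 then (1 : ℤ) else 0) - (if k j = -1 then (1 : ℤ) else 0)) := by
          refine Finset.sum_congr rfl fun j _ => ?_
          rcases htri j with h1 | h1 | h1 <;> simp [h1]
        rw [hk, Finset.sum_sub_distrib, Finset.sum_boole, Finset.sum_boole] at hsum
        have : (P.card : ℤ) = Q.card := by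
          simp only [hPdef, hQdef]
          linarith [hsum]
        exact_mod_cast this
      let e := Finset.equivOfCardEq hcard
      have hPQ : ∀ j, j ∈ P → j ∉ Q := by
        intro j h1 h2
        rw [hmemP] at h1; rw [hmemQ] at h2; omega
      let τf : Fin N → Fin N := fun j =>
        if h1 : j ∈ P then (e ⟨j, h1⟩ : Fin N)
        else if h2 : j ∈ Q then (e.symm ⟨j, h2⟩ : Fin N)
        else j
      have hτfP : ∀ j (h1 : j ∈ P), τf j = (e ⟨j, h1⟩ : Fin N) := by
        intro j h1; simp [τf, h1]
      have hτfQ : ∀ j (h2 : j ∈ Q), τf j = (e.symm ⟨j, h2⟩ : Fin N) := by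
        intro j h2
        have h1 : j ∉ P := fun h1 => hPQ j h1 h2
        simp [τf, h1, h2]
      have hτfZ : ∀ j, j ∉ P → j ∉ Q → τf j = j := by
        intro j h1 h2; simp [τf, h1, h2]
      have hinv : Function.Involutive τf := by
        intro j
        by_cases h1 : j ∈ P
        · rw [hτfP j h1]
          have hy : ((e ⟨j, h1⟩ : {x // x ∈ Q}) : Fin N) ∈ Q := (e ⟨j, h1⟩).2
          rw [hτfQ _ hy]
          have : (⟨((e ⟨j, h1⟩ : {x // x ∈ Q}) : Fin N), hy⟩ : {x // x ∈ Q}) = e ⟨j, h1⟩ :=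
            Subtype.ext rfl
          rw [this, Equiv.symm_apply_apply]
        · by_cases h2 : j ∈ Q
          · rw [hτfQ j h2]
            have hy : ((e.symm ⟨j, h2⟩ : {x // x ∈ P}) : Fin N) ∈ P := (e.symm ⟨j, h2⟩).2
            rw [hτfP _ hy]
            have : (⟨((e.symm ⟨j, h2⟩ : {x // x ∈ P}) : Fin N), hy⟩ : {x // x ∈ P}) =
                e.symm ⟨j, h2⟩ := Subtype.ext rfl
            rw [this, Equiv.apply_symm_apply]
          · rw [hτfZ j h1 h2, hτfZ j h1 h2]
      refine ⟨hinv.toPerm τf, fun j => ?_⟩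
      show g (τf j) = t j
      by_cases h1 : j ∈ P
      · rw [hτfP j h1]
        have hy : ((e ⟨j, h1⟩ : {x // x ∈ Q}) : Fin N) ∈ Q := (e ⟨j, h1⟩).2
        have hk2 : k ((e ⟨j, h1⟩ : {x // x ∈ Q}) : Fin N) = -1 := (hmemQ _).mp hy
        have ht2 : t ((e ⟨j, h1⟩ : {x // x ∈ Q}) : Fin N) = tmin := hQ _ hk2
        have ht1 : t j = tmax := hP j ((hmemP j).mp h1)
        simp only [hg, hk2, ht2, ht1, hgap]
        push_cast
        ring
      · by_cases h2 : j ∈ Q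
        · rw [hτfQ j h2]
          have hy : ((e.symm ⟨j, h2⟩ : {x // x ∈ P}) : Fin N) ∈ P := (e.symm ⟨j, h2⟩).2
          have hk2 : k ((e.symm ⟨j, h2⟩ : {x // x ∈ P}) : Fin N) = 1 := (hmemP _).mp hy
          have ht2 : t ((e.symm ⟨j, h2⟩ : {x // x ∈ P}) : Fin N) = tmax := hP _ hk2
          have ht1 : t j = tmin := hQ j ((hmemQ j).mp h2)
          simp only [hg, hk2, ht2, ht1, hgap]
          push_cast
          ring
        · rw [hτfZ j h1 h2]
          have hk0 : k j = 0 := by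
            rcases htri j with h3 | h3 | h3
            · exact absurd ((hmemP j).mpr h3) h1
            · exact h3
            · exact absurd ((hmemQ j).mpr h3) h2
          simp [hg, hk0]
  have hgσ : g ∘ σ = t' := by
    funext i
    exact (h i).symm
  have hgτ : g ∘ τ = t := by
    funext j
    exact hτ j
  have h1 : Monotone (g ∘ σ) := by
    rw [hgσ]; exact fun a b hab => ht'm a b hab
  have h2 : Monotone (g ∘ τ) := by
    rw [hgτ]; exact fun a b hab => htm a b hab
  have heq : g ∘ σ = g ∘ τ := Tuple.unique_monotone h1 h2
  rw [hgσ, hgτ] at heq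
  exact heq.symm
end

section
/- Let v_1, …, v_k ∈ ℤ^N. Then Σ_{1≤i,j≤k} |[v_i]_+ − [v_j]_+| ≤ Σ_{1≤i,j≤k} |v_i − v_j|₂², and equality holds if and only if there is a permutation of the indices after which v_1 ≥ v_2 ≥ ⋯ ≥ v_k componentwise and |v_i − v_j|_∞ ≤ 1 for all i, j. -/
/-!
Writing `[vᵢ]₊ − [vⱼ]₊ = Σ_l (vᵢ − vⱼ)_l`, each pair satisfies
`|Σ_l d_l| ≤ Σ_l |d_l| ≤ Σ_l d_l²` for `d = vᵢ − vⱼ ∈ ℤ^N`. The first inequality is an equality iff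
all `d_l` have the same sign, i.e. `vᵢ` and `vⱼ` are comparable, and the second iff every
`|d_l| ≤ 1`, since `|x| ≤ x²` on `ℤ` with equality iff `|x| ≤ 1`. A family of pairwise
comparable vectors is a chain, so it can be sorted into a descending one.
-/

open Finset

theorem Int.abs_le_sq (x : ℤ) : |x| ≤ x ^ 2 :=
  Int.natCast_natAbs x ▸ Int.natAbs_le_self_sq x

theorem Int.abs_eq_sq_iff (x : ℤ) : |x| = x ^ 2 ↔ |x| ≤ 1 := by
  rw [← sq_abs]
  have := abs_nonneg x
  constructor
  · intro h
    nlinarith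
  · intro h
    obtain h | h : |x| = 0 ∨ |x| = 1 := by omega
    all_goals simp [h]

theorem Finset.abs_sum_eq_sum_abs_iff {ι G : Type*} [AddCommGroup G] [LinearOrder G]
    [IsOrderedAddMonoid G] (s : Finset ι) (f : ι → G) :
    |∑ i ∈ s, f i| = ∑ i ∈ s, |f i| ↔ (∀ i ∈ s, 0 ≤ f i) ∨ (∀ i ∈ s, f i ≤ 0) := by
  have hpos : ∑ i ∈ s, f i = ∑ i ∈ s, |f i| ↔ ∀ i ∈ s, 0 ≤ f i := by
    rw [sum_eq_sum_iff_of_le fun i _ ↦ le_abs_self (f i)]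
    simp only [eq_comm (a := f _), abs_eq_self]
  have hneg : -∑ i ∈ s, f i = ∑ i ∈ s, |f i| ↔ ∀ i ∈ s, f i ≤ 0 := by
    rw [← sum_neg_distrib, sum_eq_sum_iff_of_le fun i _ ↦ neg_le_abs (f i)]
    simp only [eq_comm (a := -f _), abs_eq_neg_self]
  rw [← hpos, ← hneg]
  have hnonneg : 0 ≤ ∑ i ∈ s, |f i| := sum_nonneg fun i _ ↦ abs_nonneg (f i)
  constructor
  · intro h
    rcases abs_choice (∑ i ∈ s, f i) with h' | h' <;> rw [h'] at h <;> simp [h]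
  · rintro (h | h) <;> rw [← h] at hnonneg ⊢
    · exact abs_of_nonneg hnonneg
    · rw [abs_of_nonpos (neg_nonneg.mp hnonneg)]

theorem Fin.exists_perm_antitone_iff {α : Type*} [PartialOrder α] {k : ℕ} (v : Fin k → α) :
    (∃ σ : Equiv.Perm (Fin k), Antitone (v ∘ σ)) ↔ ∀ i j, v i ≤ v j ∨ v j ≤ v i := by
  constructor
  · rintro ⟨σ, hσ⟩ i j
    rcases le_total (σ.symm i) (σ.symm j) with h | h
    · right; simpa using hσ h
    · left; simpa using hσ h
  · intro hv
    let f : Fin k → (LinearExtension α)ᵒᵈ := fun i ↦ OrderDual.toDual (toLinearExtension (v i))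
    set σ := Tuple.sort f
    refine ⟨σ, fun a b hab ↦ ?_⟩
    have hsorted : toLinearExtension (v (σ b)) ≤ toLinearExtension (v (σ a)) :=
      Tuple.monotone_sort f hab
    rcases hv (σ a) (σ b) with h | h
    · have heq : toLinearExtension (v (σ a)) = toLinearExtension (v (σ b)) :=
        le_antisymm (toLinearExtension.monotone h) hsorted
      exact (show v (σ a) = v (σ b) from heq).ge
    · exact h

section Pairwise

variable {ι : Type*} [Fintype ι] (u w : ι → ℤ)

theorem Int.abs_sum_sub_sum_le_sum_sq :
    |∑ l, u l - ∑ l, w l| ≤ ∑ l, (u l - w l) ^ 2 := by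
  rw [← sum_sub_distrib]
  exact (abs_sum_le_sum_abs _ _).trans (sum_le_sum fun l _ ↦ Int.abs_le_sq _)

theorem Int.abs_sum_sub_sum_eq_sum_sq_iff :
    |∑ l, u l - ∑ l, w l| = ∑ l, (u l - w l) ^ 2 ↔
      (u ≤ w ∨ w ≤ u) ∧ ∀ l, |u l - w l| ≤ 1 := by
  rw [← sum_sub_distrib]
  have h₁ := abs_sum_le_sum_abs (fun l ↦ u l - w l) univ
  have h₂ : ∑ l, |u l - w l| ≤ ∑ l, (u l - w l) ^ 2 := sum_le_sum fun l _ ↦ Int.abs_le_sq _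
  have hsplit : |∑ l, (u l - w l)| = ∑ l, (u l - w l) ^ 2 ↔
      |∑ l, (u l - w l)| = ∑ l, |u l - w l| ∧ ∑ l, |u l - w l| = ∑ l, (u l - w l) ^ 2 := by
    omega
  rw [hsplit, abs_sum_eq_sum_abs_iff, sum_eq_sum_iff_of_le fun l _ ↦ Int.abs_le_sq _]
  simp only [mem_univ, true_imp_iff, sub_nonneg, sub_nonpos, Int.abs_eq_sq_iff, Pi.le_def]
  rw [or_comm]

end Pairwise

/-- For vectors `v₁, …, v_k ∈ ℤ^N`,
`Σ_{i,j} |[vᵢ]₊ − [vⱼ]₊| ≤ Σ_{i,j} |vᵢ − vⱼ|₂²`, with equality iff after a permutation of the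
indices the vectors form a descending chain in the componentwise order and all pairwise
`ℓ^∞`-distances are at most 1. -/
theorem stmt11 (k N : ℕ) (v : Fin k → Fin N → ℤ) :
    (∑ i, ∑ j, |(∑ l, v i l) - (∑ l, v j l)|) ≤ (∑ i, ∑ j, ∑ l, (v i l - v j l) ^ 2) ∧
      ((∑ i, ∑ j, |(∑ l, v i l) - (∑ l, v j l)|) = (∑ i, ∑ j, ∑ l, (v i l - v j l) ^ 2) ↔
        ((∃ σ : Equiv.Perm (Fin k), ∀ a b : Fin k, a ≤ b → ∀ l, v (σ b) l ≤ v (σ a) l) ∧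
          (∀ i j : Fin k, ∀ l, |v i l - v j l| ≤ 1))) := by
  have hle (i j : Fin k) := Int.abs_sum_sub_sum_le_sum_sq (v i) (v j)
  refine ⟨sum_le_sum fun i _ ↦ sum_le_sum fun j _ ↦ hle i j, ?_⟩
  rw [sum_eq_sum_iff_of_le fun i _ ↦ sum_le_sum fun j _ ↦ hle i j]
  simp only [mem_univ, true_imp_iff, sum_eq_sum_iff_of_le fun _ _ ↦ hle _ _,
    Int.abs_sum_sub_sum_eq_sum_sq_iff, forall_and]
  rw [← Fin.exists_perm_antitone_iff]
  rfl
end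

section
/- Fix 0 < l < N. Label the coordinates of ℝ^N as (r_1, …, r_{N-l}, s_1, …, s_l) and let Δ_{N-1} be the standard simplex (all coordinates nonnegative, summing to 1). For (f, g) ∈ S_{N-l} × S_l, the bi-barycentric cell Δ^{(f,g)} := {(r, s) ∈ Δ_{N-1} : r_{f(1)} ≥ ⋯ ≥ r_{f(N-l)}, s_{g(1)} ≥ ⋯ ≥ s_{g(l)}} equals the convex hull of the N points (1/k₁)(u_{f(1)} + ⋯ + u_{f(k₁)}) for 1 ≤ k₁ ≤ N−l and (1/k₂)(u'_{g(1)} + ⋯ + u'_{g(k₂)}) for 1 ≤ k₂ ≤ l, where u_1, …, u_{N-l} are the standard basis vectors in the r-coordinates and u'_1, …, u'_l those in the s-coordinates. In particular each such cell is an (N-1)-simplex. -/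
private lemma bb_filter_ge (a n : ℕ) :
    (Finset.range n).filter (fun m => a ≤ m) = Finset.Ico a n := by
  ext m; simp [Finset.mem_filter, Finset.mem_range, Finset.mem_Ico, and_comm]

private lemma bb_filter_le (k n : ℕ) (hk : k < n) :
    (Finset.range n).filter (fun m => m ≤ k) = Finset.range (k+1) := by
  ext m
  simp only [Finset.mem_filter, Finset.mem_range, Nat.lt_succ_iff]
  omega

private lemma bb_tele (h : ℕ → ℝ) {a b : ℕ} (hab : a ≤ b) :
    ∑ m ∈ Finset.Ico a b, (h m - h (m+1)) = h a - h b := by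
  rw [Finset.sum_Ico_eq_sub _ hab, Finset.sum_range_sub' h, Finset.sum_range_sub' h]
  ring

private lemma bb_block (n : ℕ) (f : Equiv.Perm (Fin n)) (x : Fin n → ℝ)
    (hx0 : ∀ i, 0 ≤ x i) (hmono : ∀ a b : Fin n, a ≤ b → x (f b) ≤ x (f a)) :
    ∃ w : Fin n → ℝ, (∀ k, 0 ≤ w k) ∧ (∑ k, w k = ∑ i, x i) ∧
      (∀ i, ∑ k, w k * (if f.symm i ≤ k then ((k.val:ℝ)+1)⁻¹ else 0) = x i) := by
  set y : ℕ → ℝ := fun m => if h : m < n then x (f ⟨m, h⟩) else 0 with hy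
  have hyn : ∀ m, n ≤ m → y m = 0 := fun m hm => dif_neg (by omega)
  have hstep : ∀ m, y (m+1) ≤ y m := by
    intro m
    by_cases h1 : m + 1 < n
    · have hm : m < n := by omega
      simp only [hy, dif_pos h1, dif_pos hm]
      exact hmono ⟨m, hm⟩ ⟨m+1, h1⟩ (by simp [Fin.le_def])
    · rw [show y (m+1) = 0 from dif_neg h1]
      by_cases hm : m < n
      · simp only [hy, dif_pos hm]; exact hx0 _
      · rw [show y m = 0 from dif_neg hm]
  refine ⟨fun k => ((k.val:ℝ)+1) * (y k.val - y (k.val+1)), fun k =>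
    mul_nonneg (by positivity) (sub_nonneg.2 (hstep _)), ?_, ?_⟩
  · rw [Fin.sum_univ_eq_sum_range (fun m => ((m:ℝ)+1) * (y m - y (m+1))) n]
    have h2 : ∀ m : ℕ, ((m:ℝ)+1) * (y m - y (m+1))
        = ((m:ℝ)*y m - (((m:ℝ)+1)*y (m+1))) + y m := fun m => by ring
    rw [Finset.sum_congr rfl fun m _ => h2 m, Finset.sum_add_distrib]
    have h3 : ∑ m ∈ Finset.range n, ((m:ℝ)*y m - (((m:ℝ)+1)*y (m+1))) = 0 := by
      have h4 := Finset.sum_range_sub' (fun m => (m:ℝ) * y m) n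
      simp only [Nat.cast_zero, zero_mul, hyn n le_rfl, mul_zero, zero_sub, Nat.cast_add,
        Nat.cast_one] at h4 ⊢
      simpa using h4
    rw [h3, zero_add, ← Fin.sum_univ_eq_sum_range (fun m => y m) n]
    have h5 : ∀ k : Fin n, y k.val = x (f k) := by
      intro k; simp [hy, k.isLt]
    rw [Finset.sum_congr rfl fun k _ => h5 k]
    exact Equiv.sum_comp f x
  · intro i
    have hxi : x i = y (f.symm i).val := by
      simp [hy, (f.symm i).isLt]
    have key : ∀ k : Fin n,
        ((k.val:ℝ)+1) * (y k.val - y (k.val+1)) * (if f.symm i ≤ k then ((k.val:ℝ)+1)⁻¹ else 0)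
        = if (f.symm i).val ≤ k.val then (y k.val - y (k.val+1)) else 0 := by
      intro k
      by_cases h : f.symm i ≤ k
      · rw [if_pos h, if_pos (Fin.le_def.mp h)]
        have hne : ((k.val:ℝ)+1) ≠ 0 := by positivity
        field_simp
      · rw [if_neg h, if_neg (fun hh => h (Fin.le_def.mpr hh)), mul_zero]
    rw [Finset.sum_congr rfl fun k _ => key k,
      Fin.sum_univ_eq_sum_range (fun m => if (f.symm i).val ≤ m then (y m - y (m+1)) else 0) n,
      ← Finset.sum_filter, bb_filter_ge, bb_tele y (le_of_lt (f.symm i).isLt),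
      hyn n le_rfl, sub_zero, ← hxi]

private lemma bb_vsum (n : ℕ) (f : Equiv.Perm (Fin n)) (k : Fin n) :
    ∑ i : Fin n, (if f.symm i ≤ k then ((k.val:ℝ)+1)⁻¹ else 0) = 1 := by
  rw [← Equiv.sum_comp f (fun i => if f.symm i ≤ k then ((k.val:ℝ)+1)⁻¹ else 0)]
  simp only [Equiv.symm_apply_apply]
  have h1 : ∀ j : Fin n, (if j ≤ k then ((k.val:ℝ)+1)⁻¹ else 0)
      = if j.val ≤ k.val then ((k.val:ℝ)+1)⁻¹ else 0 := by
    intro j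
    by_cases h : j ≤ k
    · rw [if_pos h, if_pos (Fin.le_def.mp h)]
    · rw [if_neg h, if_neg (fun hh => h (Fin.le_def.mpr hh))]
  rw [Finset.sum_congr rfl fun j _ => h1 j,
    Fin.sum_univ_eq_sum_range (fun m => if m ≤ k.val then ((k.val:ℝ)+1)⁻¹ else 0) n,
    ← Finset.sum_filter, bb_filter_le k.val n k.isLt, Finset.sum_const, Finset.card_range,
    nsmul_eq_mul]
  have hne : ((k.val:ℝ)+1) ≠ 0 := by positivity
  push_cast
  field_simp

private lemma bb_li (n : ℕ) (f : Equiv.Perm (Fin n)) (c : Fin n → ℝ)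
    (h : ∀ j : Fin n, ∑ k, c k * (if j ≤ k then ((k.val:ℝ)+1)⁻¹ else 0) = 0) :
    ∀ k, c k = 0 := by
  set D : ℕ → ℝ := fun m => if hm : m < n then c ⟨m, hm⟩ * ((m:ℝ)+1)⁻¹ else 0 with hD
  have hsum : ∀ j : Fin n, ∑ m ∈ Finset.Ico j.val n, D m = 0 := by
    intro j
    have h0 := h j
    have h1 : ∀ k : Fin n, c k * (if j ≤ k then ((k.val:ℝ)+1)⁻¹ else 0)
        = if j.val ≤ k.val then D k.val else 0 := by
      intro k
      by_cases hk : j ≤ k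
      · rw [if_pos hk, if_pos (Fin.le_def.mp hk)]
        simp [hD, k.isLt]
      · rw [if_neg hk, if_neg (fun hh => hk (Fin.le_def.mpr hh)), mul_zero]
    rw [Finset.sum_congr rfl fun k _ => h1 k,
      Fin.sum_univ_eq_sum_range (fun m => if j.val ≤ m then D m else 0) n,
      ← Finset.sum_filter, bb_filter_ge] at h0
    exact h0
  have hsum' : ∀ j : ℕ, j ≤ n → ∑ m ∈ Finset.Ico j n, D m = 0 := by
    intro j hj
    rcases lt_or_eq_of_le hj with hlt | rfl
    · exact hsum ⟨j, hlt⟩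
    · simp
  have hDz : ∀ m, m < n → D m = 0 := by
    intro m hm
    have e1 : ∑ i ∈ Finset.Ico m n, D i = D m + ∑ i ∈ Finset.Ico (m+1) n, D i :=
      Finset.sum_eq_sum_Ico_succ_bot hm D
    rw [hsum' m (le_of_lt hm), hsum' (m+1) hm] at e1
    linarith
  intro k
  have := hDz k.val k.isLt
  simp only [hD, dif_pos k.isLt, Fin.eta] at this
  have hne : ((k.val:ℝ)+1)⁻¹ ≠ 0 := by positivity
  exact (mul_eq_zero.mp this).resolve_right hne

/-- The bi-barycentric cell `Δ^{(f,g)}` of type `l` of the standard simplex `Δ_{N-1}`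
(coordinates split into an `r`-group of size `N−l` and an `s`-group of size `l`) is the convex
hull of the `N` points `(1/k₁)(u_{f(1)} + ⋯ + u_{f(k₁)})` and `(1/k₂)(u'_{g(1)} + ⋯ + u'_{g(k₂)})`;
these `N` points are affinely independent, so the cell is an `(N−1)`-simplex. -/
theorem stmt14 (N l : ℕ) (hl : 0 < l) (hlN : l < N)
    (f : Equiv.Perm (Fin (N - l))) (g : Equiv.Perm (Fin l))
    (vert : (Fin (N - l) ⊕ Fin l) → ((Fin (N - l) ⊕ Fin l) → ℝ))
    (hvert₁ : ∀ k : Fin (N - l), vert (Sum.inl k) =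
      Sum.elim (fun i => if f.symm i ≤ k then ((k.val : ℝ) + 1)⁻¹ else 0) (fun _ => 0))
    (hvert₂ : ∀ k : Fin l, vert (Sum.inr k) =
      Sum.elim (fun _ => (0 : ℝ)) (fun i => if g.symm i ≤ k then ((k.val : ℝ) + 1)⁻¹ else 0)) :
    ({x : (Fin (N - l) ⊕ Fin l) → ℝ | (∀ i, 0 ≤ x i) ∧ (∑ i, x i = 1) ∧
        (∀ a b : Fin (N - l), a ≤ b → x (Sum.inl (f b)) ≤ x (Sum.inl (f a))) ∧
        (∀ a b : Fin l, a ≤ b → x (Sum.inr (g b)) ≤ x (Sum.inr (g a)))} =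
      convexHull ℝ (Set.range vert)) ∧
      AffineIndependent ℝ vert := by
  constructor
  · ext x
    constructor
    · rintro ⟨hx0, hx1, hm1, hm2⟩
      obtain ⟨wL, hwL0, hwLs, hwLr⟩ :=
        bb_block (N-l) f (fun i => x (Sum.inl i)) (fun i => hx0 _) hm1
      obtain ⟨wR, hwR0, hwRs, hwRr⟩ :=
        bb_block l g (fun i => x (Sum.inr i)) (fun i => hx0 _) hm2
      set w : Fin (N-l) ⊕ Fin l → ℝ := Sum.elim wL wR with hw
      have hw0 : ∀ i, 0 ≤ w i := by
        rintro (i|i)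
        · exact hwL0 i
        · exact hwR0 i
      have hws : ∑ i, w i = 1 := by
        rw [Fintype.sum_sum_type]
        simp only [hw, Sum.elim_inl, Sum.elim_inr]
        rw [hwLs, hwRs, ← Fintype.sum_sum_type]
        exact hx1
      have hrep : ∑ i, w i • vert i = x := by
        funext i0
        rw [Finset.sum_apply]
        cases i0 with
        | inl i0 =>
          rw [Fintype.sum_sum_type]
          simp only [hw, Sum.elim_inl, Sum.elim_inr, Pi.smul_apply, smul_eq_mul,
            hvert₁, hvert₂, mul_zero, Finset.sum_const_zero, add_zero]
          exact hwLr i0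
        | inr i0 =>
          rw [Fintype.sum_sum_type]
          simp only [hw, Sum.elim_inl, Sum.elim_inr, Pi.smul_apply, smul_eq_mul,
            hvert₁, hvert₂, mul_zero, Finset.sum_const_zero, zero_add]
          exact hwRr i0
      rw [← hrep]
      have hmem := Finset.centerMass_mem_convexHull (Finset.univ) (fun i _ => hw0 i)
        (by rw [hws]; norm_num) (fun i _ => Set.mem_range_self (f := vert) i)
      rwa [Finset.centerMass_eq_of_sum_1 _ _ hws] at hmem
    · intro hx
      refine convexHull_min ?_ ?_ hx
      · rintro _ ⟨(k|k), rfl⟩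
        · simp only [Set.mem_setOf_eq]
          rw [hvert₁ k]
          refine ⟨?_, ?_, ?_, ?_⟩
          · rintro (i|i)
            · simp only [Sum.elim_inl]
              split_ifs
              · positivity
              · exact le_refl 0
            · simp only [Sum.elim_inr]; exact le_refl 0
          · rw [Fintype.sum_sum_type]
            simp only [Sum.elim_inl, Sum.elim_inr, Finset.sum_const_zero, add_zero]
            exact bb_vsum (N-l) f k
          · intro a b hab
            simp only [Sum.elim_inl, Equiv.symm_apply_apply]
            split_ifs with h1 h2
            · exact le_refl _
            · exact absurd (le_trans hab h1) h2
            · positivity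
            · exact le_refl _
          · intro a b hab
            simp only [Sum.elim_inr]
            exact le_refl 0
        · simp only [Set.mem_setOf_eq]
          rw [hvert₂ k]
          refine ⟨?_, ?_, ?_, ?_⟩
          · rintro (i|i)
            · simp only [Sum.elim_inl]; exact le_refl 0
            · simp only [Sum.elim_inr]
              split_ifs
              · positivity
              · exact le_refl 0
          · rw [Fintype.sum_sum_type]
            simp only [Sum.elim_inl, Sum.elim_inr, Finset.sum_const_zero, zero_add]
            exact bb_vsum l g k
          · intro a b hab
            simp only [Sum.elim_inl]
            exact le_refl 0
          · intro a b hab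
            simp only [Sum.elim_inr, Equiv.symm_apply_apply]
            split_ifs with h1 h2
            · exact le_refl _
            · exact absurd (le_trans hab h1) h2
            · positivity
            · exact le_refl _
      · intro p hp q hq a b ha hb hab
        obtain ⟨hp0, hp1, hpm1, hpm2⟩ := hp
        obtain ⟨hq0, hq1, hqm1, hqm2⟩ := hq
        refine ⟨?_, ?_, ?_, ?_⟩
        · intro i
          simp only [Pi.add_apply, Pi.smul_apply, smul_eq_mul]
          exact add_nonneg (mul_nonneg ha (hp0 i)) (mul_nonneg hb (hq0 i))
        · simp only [Pi.add_apply, Pi.smul_apply, smul_eq_mul]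
          rw [Finset.sum_add_distrib, ← Finset.mul_sum, ← Finset.mul_sum, hp1, hq1]
          simpa using hab
        · intro a' b' h
          simp only [Pi.add_apply, Pi.smul_apply, smul_eq_mul]
          exact add_le_add (mul_le_mul_of_nonneg_left (hpm1 a' b' h) ha)
            (mul_le_mul_of_nonneg_left (hqm1 a' b' h) hb)
        · intro a' b' h
          simp only [Pi.add_apply, Pi.smul_apply, smul_eq_mul]
          exact add_le_add (mul_le_mul_of_nonneg_left (hpm2 a' b' h) ha)
            (mul_le_mul_of_nonneg_left (hqm2 a' b' h) hb)
  · have li : ∀ c : Fin (N-l) ⊕ Fin l → ℝ, ∑ i, c i • vert i = 0 → ∀ i, c i = 0 := by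
      intro c hc
      have hcoord : ∀ i0, ∑ i, c i * vert i i0 = 0 := by
        intro i0
        have h := congrFun hc i0
        rw [Finset.sum_apply] at h
        simpa [Pi.smul_apply, smul_eq_mul] using h
      have hL : ∀ k, c (Sum.inl k) = 0 := by
        apply bb_li (N-l) f
        intro j
        have h := hcoord (Sum.inl (f j))
        rw [Fintype.sum_sum_type] at h
        simpa only [hvert₁, hvert₂, Sum.elim_inl, Equiv.symm_apply_apply, mul_zero,
          Finset.sum_const_zero, add_zero] using h
      have hR : ∀ k, c (Sum.inr k) = 0 := by
        apply bb_li l g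
        intro j
        have h := hcoord (Sum.inr (g j))
        rw [Fintype.sum_sum_type] at h
        simpa only [hvert₁, hvert₂, Sum.elim_inl, Sum.elim_inr, Equiv.symm_apply_apply, mul_zero,
          Finset.sum_const_zero, zero_add] using h
      rintro (k|k)
      · exact hL k
      · exact hR k
    rw [affineIndependent_iff]
    intro s w hw0 hws i hi
    have key : ∀ i, (fun j => if j ∈ s then w j else 0) i = 0 := by
      apply li
      rw [show (∑ j, (if j ∈ s then w j else 0) • vert j) = ∑ j ∈ s, w j • vert j from ?_]
      · exact hws
      · simp only [ite_smul, zero_smul]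
        rw [Finset.sum_ite_mem, Finset.univ_inter]
    have := key i
    simpa [hi] using this
end
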